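/- arXiv:1003.1557 — 14 statements merged into one kernel-verified Lean document; each statement's English description precedes it below -/
import Mathlib

section
/- Suppose v1 ≥ v2 + v3 + v4 with all vi > 0. Then for every point p of the probability simplex, L(v,p) ≤ v1/27. -/
/-! Split `v1 = (v1 - v2 - v3 - v4) + v2 + v3 + v4`; then `L(v,p)` becomes a combination with
nonnegative weights summing to `v1` of the products `p2 p3 p4`, `(p1 + p2) p3 p4`,
`(p1 + p3) p2 p4`, `(p1 + p4) p2 p3`, each of three nonnegative numbers of sum at most `1`,
hence at most `1/27` by AM-GM. -/

lemma twenty_seven_mul_le_add_pow_three {a b c : ℝ} (ha : 0 ≤ a) (hb : 0 ≤ b) (hc : 0 ≤ c) :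
    27 * (a * b * c) ≤ (a + b + c) ^ 3 := by
  nlinarith [sq_nonneg (a - b), sq_nonneg (b - c), sq_nonneg (a - c),
    mul_nonneg ha hb, mul_nonneg hb hc, mul_nonneg ha hc]

lemma mul_mul_le_of_add_add_le_one {a b c : ℝ} (ha : 0 ≤ a) (hb : 0 ≤ b) (hc : 0 ≤ c)
    (h : a + b + c ≤ 1) : a * b * c ≤ 1 / 27 := by
  have hpow : (a + b + c) ^ 3 ≤ 1 := pow_le_one₀ (by positivity) h
  linarith [twenty_seven_mul_le_add_pow_three ha hb hc]

theorem stmt0_general (v1 v2 v3 v4 p1 p2 p3 p4 : ℝ)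
    (hv2 : 0 < v2) (hv3 : 0 < v3) (hv4 : 0 < v4)
    (hsat : v2 + v3 + v4 ≤ v1)
    (hp1 : 0 ≤ p1) (hp2 : 0 ≤ p2) (hp3 : 0 ≤ p3) (hp4 : 0 ≤ p4)
    (hsum : p1 + p2 + p3 + p4 = 1) :
    v4 * p1 * p2 * p3 + v3 * p1 * p2 * p4 + v2 * p1 * p3 * p4 + v1 * p2 * p3 * p4
      ≤ v1 / 27 := by
  have h1 : p2 * p3 * p4 ≤ 1 / 27 := mul_mul_le_of_add_add_le_one hp2 hp3 hp4 (by linarith)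
  have h2 : (p1 + p2) * p3 * p4 ≤ 1 / 27 :=
    mul_mul_le_of_add_add_le_one (by positivity) hp3 hp4 (by linarith)
  have h3 : (p1 + p3) * p2 * p4 ≤ 1 / 27 :=
    mul_mul_le_of_add_add_le_one (by positivity) hp2 hp4 (by linarith)
  have h4 : (p1 + p4) * p2 * p3 ≤ 1 / 27 :=
    mul_mul_le_of_add_add_le_one (by positivity) hp2 hp3 (by linarith)
  have hw : 0 ≤ v1 - v2 - v3 - v4 := by linarith
  calc v4 * p1 * p2 * p3 + v3 * p1 * p2 * p4 + v2 * p1 * p3 * p4 + v1 * p2 * p3 * p4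
      = (v1 - v2 - v3 - v4) * (p2 * p3 * p4) + v2 * ((p1 + p2) * p3 * p4)
          + v3 * ((p1 + p3) * p2 * p4) + v4 * ((p1 + p4) * p2 * p3) := by ring
    _ ≤ (v1 - v2 - v3 - v4) * (1 / 27) + v2 * (1 / 27) + v3 * (1 / 27) + v4 * (1 / 27) := by
      gcongr
    _ = v1 / 27 := by ring

/-- If `v1 ≥ v2 + v3 + v4` with all `vi > 0`, then for every point `p` of the
probability simplex, `L(v,p) ≤ v1/27`. -/
theorem stmt0 (v1 v2 v3 v4 p1 p2 p3 p4 : ℝ)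
    (hv1 : 0 < v1) (hv2 : 0 < v2) (hv3 : 0 < v3) (hv4 : 0 < v4)
    (hsat : v2 + v3 + v4 ≤ v1)
    (hp1 : 0 ≤ p1) (hp2 : 0 ≤ p2) (hp3 : 0 ≤ p3) (hp4 : 0 ≤ p4)
    (hsum : p1 + p2 + p3 + p4 = 1) :
    v4 * p1 * p2 * p3 + v3 * p1 * p2 * p4 + v2 * p1 * p3 * p4 + v1 * p2 * p3 * p4
      ≤ v1 / 27 :=
  stmt0_general v1 v2 v3 v4 p1 p2 p3 p4 hv2 hv3 hv4 hsat hp1 hp2 hp3 hp4 hsum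
end

section
/- Suppose all vi > 0 and v1 < v2 + v3 + v4. Then there exists a point p of the probability simplex with L(v,p) > L(v,(0,1/3,1/3,1/3)) = v1/27; hence (0,1/3,1/3,1/3) does not maximize L(v,·) over the simplex. -/
/-! Move from the centroid `(0, 1/3, 1/3, 1/3)` of the face `p1 = 0` towards the first vertex,
to `(t, s, s, s)` with `s = (1 - t)/3`. Then `27 L - v1 = t g(t)` for a quadratic `g` with
`g(0) = 3 (v2 + v3 + v4 - v1) > 0`, so `L` strictly increases for small `t > 0`. -/

open Filter Set Topology

lemma exists_mem_Ioo_zero_one_pos_of_pos_at_zero {f : ℝ → ℝ} (hf : ContinuousAt f 0)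
    (h0 : 0 < f 0) : ∃ t ∈ Ioo (0 : ℝ) 1, 0 < f t := by
  have hpos : ∀ᶠ t in 𝓝[>] (0 : ℝ), 0 < f t :=
    nhdsWithin_le_nhds (hf.eventually (lt_mem_nhds h0))
  exact (Filter.Eventually.and (Ioo_mem_nhdsGT one_pos) hpos).exists

lemma objective_along_ray_sub (v1 v2 v3 v4 t : ℝ) :
    v4 * t * ((1 - t) / 3) * ((1 - t) / 3) + v3 * t * ((1 - t) / 3) * ((1 - t) / 3)
        + v2 * t * ((1 - t) / 3) * ((1 - t) / 3) + v1 * ((1 - t) / 3) * ((1 - t) / 3) * ((1 - t) / 3)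
        - v1 / 27
      = t * (3 * (v2 + v3 + v4) * (1 - t) ^ 2 - v1 * (3 - 3 * t + t ^ 2)) / 27 := by
  ring

theorem stmt2_general (v1 v2 v3 v4 : ℝ)
    (hlt : v1 < v2 + v3 + v4) :
    (v4 * 0 * (1/3) * (1/3) + v3 * 0 * (1/3) * (1/3) + v2 * 0 * (1/3) * (1/3)
        + v1 * (1/3) * (1/3) * (1/3) = v1 / 27) ∧
    ∃ p1 p2 p3 p4 : ℝ, 0 ≤ p1 ∧ 0 ≤ p2 ∧ 0 ≤ p3 ∧ 0 ≤ p4 ∧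
      p1 + p2 + p3 + p4 = 1 ∧
      v4 * p1 * p2 * p3 + v3 * p1 * p2 * p4 + v2 * p1 * p3 * p4 + v1 * p2 * p3 * p4
        > v1 / 27 := by
  refine ⟨by ring, ?_⟩
  obtain ⟨t, ⟨ht0, ht1⟩, hg⟩ := exists_mem_Ioo_zero_one_pos_of_pos_at_zero
    (f := fun t ↦ 3 * (v2 + v3 + v4) * (1 - t) ^ 2 - v1 * (3 - 3 * t + t ^ 2))
    (by fun_prop) (by norm_num; linarith)
  have hs : 0 ≤ (1 - t) / 3 := by linarith
  refine ⟨t, (1 - t) / 3, (1 - t) / 3, (1 - t) / 3, ht0.le, hs, hs, hs, by ring, ?_⟩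
  have hgain := objective_along_ray_sub v1 v2 v3 v4 t
  have : 0 < t * (3 * (v2 + v3 + v4) * (1 - t) ^ 2 - v1 * (3 - 3 * t + t ^ 2)) / 27 := by
    positivity
  linarith

/-- If all `vi > 0` and `v1 < v2 + v3 + v4`, then there is a point `p` of the
probability simplex with `L(v,p) > L(v,(0,1/3,1/3,1/3)) = v1/27`; hence
`(0,1/3,1/3,1/3)` does not maximize `L(v,·)` over the simplex. -/
theorem stmt2 (v1 v2 v3 v4 : ℝ)
    (hv1 : 0 < v1) (hv2 : 0 < v2) (hv3 : 0 < v3) (hv4 : 0 < v4)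
    (hlt : v1 < v2 + v3 + v4) :
    (v4 * 0 * (1/3) * (1/3) + v3 * 0 * (1/3) * (1/3) + v2 * 0 * (1/3) * (1/3)
        + v1 * (1/3) * (1/3) * (1/3) = v1 / 27) ∧
    ∃ p1 p2 p3 p4 : ℝ, 0 ≤ p1 ∧ 0 ≤ p2 ∧ 0 ≤ p3 ∧ 0 ≤ p4 ∧
      p1 + p2 + p3 + p4 = 1 ∧
      v4 * p1 * p2 * p3 + v3 * p1 * p2 * p4 + v2 * p1 * p3 * p4 + v1 * p2 * p3 * p4
        > v1 / 27 :=
  stmt2_general v1 v2 v3 v4 hlt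
end

section
/- Suppose all vi > 0 and v1 > v2. Then any point p of the probability simplex that maximizes L(v,·) over the simplex satisfies p1 ≤ p2. -/
/-!
If `p₁ > p₂`, replacing both coordinates by their mean keeps `p` in the simplex and
changes `L` by `(v₄p₃ + v₃p₄)d² + (v₁ - v₂)p₃p₄d` with `d = (p₁ - p₂)/2 > 0`.
Maximality forces this to be `≤ 0`, hence `p₃ = p₄ = 0`; but then
`L(v,p) = 0 < v₄/27 = L(v, (1/3,1/3,1/3,0))`.
-/

-- `L(v, q)` with `v` and `q` written out coordinatewise.
def tripleSum (v1 v2 v3 v4 q1 q2 q3 q4 : ℝ) : ℝ :=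
  v4 * q1 * q2 * q3 + v3 * q1 * q2 * q4 + v2 * q1 * q3 * q4 + v1 * q2 * q3 * q4

section

variable (v1 v2 v3 v4 : ℝ)

theorem tripleSum_average_sub (q1 q2 q3 q4 : ℝ) :
    tripleSum v1 v2 v3 v4 ((q1 + q2) / 2) ((q1 + q2) / 2) q3 q4
        - tripleSum v1 v2 v3 v4 q1 q2 q3 q4
      = (v4 * q3 + v3 * q4) * ((q1 - q2) / 2) ^ 2 + (v1 - v2) * q3 * q4 * ((q1 - q2) / 2) := by
  unfold tripleSum
  ring

theorem tripleSum_zero_zero (q1 q2 : ℝ) : tripleSum v1 v2 v3 v4 q1 q2 0 0 = 0 := by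
  simp [tripleSum]

theorem tripleSum_third_pos (hv4 : 0 < v4) :
    0 < tripleSum v1 v2 v3 v4 (1 / 3) (1 / 3) (1 / 3) 0 := by
  simp only [tripleSum, mul_zero, add_zero]
  positivity

variable {v1 v2 v3 v4}

theorem eq_zero_of_tripleSum_average_le {q1 q2 q3 q4 : ℝ}
    (hv3 : 0 < v3) (hv4 : 0 < v4) (h12 : v2 ≤ v1) (hq3 : 0 ≤ q3) (hq4 : 0 ≤ q4) (h : q2 < q1)
    (hle : tripleSum v1 v2 v3 v4 ((q1 + q2) / 2) ((q1 + q2) / 2) q3 q4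
      ≤ tripleSum v1 v2 v3 v4 q1 q2 q3 q4) :
    q3 = 0 ∧ q4 = 0 := by
  have hgain := tripleSum_average_sub v1 v2 v3 v4 q1 q2 q3 q4
  have hd : 0 < (q1 - q2) / 2 := by linarith
  have hcross : 0 ≤ (v1 - v2) * q3 * q4 * ((q1 - q2) / 2) := by
    have := sub_nonneg.mpr h12
    positivity
  have hlin : v4 * q3 + v3 * q4 ≤ 0 :=
    nonpos_of_mul_nonpos_left (by linarith) (pow_pos hd 2)
  constructor <;> nlinarith

end

theorem stmt4_general (v1 v2 v3 v4 p1 p2 p3 p4 : ℝ)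
    (hv3 : 0 < v3) (hv4 : 0 < v4)
    (h12 : v2 < v1)
    (hp2 : 0 ≤ p2) (hp3 : 0 ≤ p3) (hp4 : 0 ≤ p4)
    (hsum : p1 + p2 + p3 + p4 = 1)
    (hmax : ∀ q1 q2 q3 q4 : ℝ, 0 ≤ q1 → 0 ≤ q2 → 0 ≤ q3 → 0 ≤ q4 →
      q1 + q2 + q3 + q4 = 1 →
      v4 * q1 * q2 * q3 + v3 * q1 * q2 * q4 + v2 * q1 * q3 * q4 + v1 * q2 * q3 * q4
        ≤ v4 * p1 * p2 * p3 + v3 * p1 * p2 * p4 + v2 * p1 * p3 * p4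
          + v1 * p2 * p3 * p4) :
    p1 ≤ p2 := by
  have hmax' : ∀ q1 q2 q3 q4 : ℝ, 0 ≤ q1 → 0 ≤ q2 → 0 ≤ q3 → 0 ≤ q4 →
      q1 + q2 + q3 + q4 = 1 →
      tripleSum v1 v2 v3 v4 q1 q2 q3 q4 ≤ tripleSum v1 v2 v3 v4 p1 p2 p3 p4 := hmax
  by_contra! h
  obtain ⟨rfl, rfl⟩ := eq_zero_of_tripleSum_average_le hv3 hv4 h12.le hp3 hp4 h
    (hmax' _ _ _ _ (by linarith) (by linarith) hp3 hp4 (by linarith))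
  have hthird := hmax' (1 / 3) (1 / 3) (1 / 3) 0 (by norm_num) (by norm_num) (by norm_num) le_rfl
    (by norm_num)
  linarith [tripleSum_third_pos v1 v2 v3 v4 hv4, tripleSum_zero_zero v1 v2 v3 v4 p1 p2]

/-- If all `vi > 0` and `v1 > v2`, then any maximizer `p` of `L(v,·)` over the
probability simplex satisfies `p1 ≤ p2`. -/
theorem stmt4 (v1 v2 v3 v4 p1 p2 p3 p4 : ℝ)
    (hv1 : 0 < v1) (hv2 : 0 < v2) (hv3 : 0 < v3) (hv4 : 0 < v4)
    (h12 : v2 < v1)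
    (hp1 : 0 ≤ p1) (hp2 : 0 ≤ p2) (hp3 : 0 ≤ p3) (hp4 : 0 ≤ p4)
    (hsum : p1 + p2 + p3 + p4 = 1)
    (hmax : ∀ q1 q2 q3 q4 : ℝ, 0 ≤ q1 → 0 ≤ q2 → 0 ≤ q3 → 0 ≤ q4 →
      q1 + q2 + q3 + q4 = 1 →
      v4 * q1 * q2 * q3 + v3 * q1 * q2 * q4 + v2 * q1 * q3 * q4 + v1 * q2 * q3 * q4
        ≤ v4 * p1 * p2 * p3 + v3 * p1 * p2 * p4 + v2 * p1 * p3 * p4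
          + v1 * p2 * p3 * p4) :
    p1 ≤ p2 :=
  stmt4_general v1 v2 v3 v4 p1 p2 p3 p4 hv3 hv4 h12 hp2 hp3 hp4 hsum hmax
end

section
/- Suppose all vi > 0 and v1 = v2. Then any point p of the probability simplex that maximizes L(v,·) over the simplex satisfies p1 = p2. -/
/-!
With `v1 = v2 = a`, the objective reads `p1 p2 (v4 p3 + v3 p4) + a (p1 + p2) p3 p4`. Replacing
`p1, p2` by their mean keeps `p1 + p2` and raises `p1 p2` by `(p1 - p2)² / 4`, so it raises the
objective by `(p1 - p2)² (v4 p3 + v3 p4) / 4`. At a maximizer this gain is `≤ 0`, while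
`v4 p3 + v3 p4 > 0`: otherwise `p3 = p4 = 0` and the objective vanishes at `p`, although it is
positive at `(1/3, 1/3, 1/3, 0)`.
-/

def L (v1 v2 v3 v4 p1 p2 p3 p4 : ℝ) : ℝ :=
  v4 * p1 * p2 * p3 + v3 * p1 * p2 * p4 + v2 * p1 * p3 * p4 + v1 * p2 * p3 * p4

theorem L_mean_sub (a v3 v4 p1 p2 p3 p4 : ℝ) :
    4 * (L a a v3 v4 ((p1 + p2) / 2) ((p1 + p2) / 2) p3 p4 - L a a v3 v4 p1 p2 p3 p4) =
      (p1 - p2) ^ 2 * (v4 * p3 + v3 * p4) := by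
  unfold L
  ring

theorem L_eq_zero_of_p3_p4_eq_zero (v1 v2 v3 v4 p1 p2 : ℝ) : L v1 v2 v3 v4 p1 p2 0 0 = 0 := by
  simp [L]

theorem L_face_pos {v1 v2 v3 v4 : ℝ} (hv4 : 0 < v4) :
    0 < L v1 v2 v3 v4 (1 / 3) (1 / 3) (1 / 3) 0 := by
  norm_num [L, hv4]

theorem weight_pos_of_L_face_le {v1 v2 v3 v4 p1 p2 p3 p4 : ℝ} (hv3 : 0 < v3) (hv4 : 0 < v4)
    (hp3 : 0 ≤ p3) (hp4 : 0 ≤ p4)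
    (hmax : L v1 v2 v3 v4 (1 / 3) (1 / 3) (1 / 3) 0 ≤ L v1 v2 v3 v4 p1 p2 p3 p4) :
    0 < v4 * p3 + v3 * p4 := by
  by_contra! hle
  obtain ⟨h3, h4⟩ :=
    (add_eq_zero_iff_of_nonneg (by positivity) (by positivity)).mp (le_antisymm hle (by positivity))
  obtain rfl : p3 = 0 := (mul_eq_zero.mp h3).resolve_left hv4.ne'
  obtain rfl : p4 = 0 := (mul_eq_zero.mp h4).resolve_left hv3.ne'
  rw [L_eq_zero_of_p3_p4_eq_zero] at hmax
  exact (L_face_pos hv4).not_ge hmax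

theorem stmt5_general (v1 v2 v3 v4 p1 p2 p3 p4 : ℝ)
    (hv3 : 0 < v3) (hv4 : 0 < v4)
    (h12 : v1 = v2)
    (hp1 : 0 ≤ p1) (hp2 : 0 ≤ p2) (hp3 : 0 ≤ p3) (hp4 : 0 ≤ p4)
    (hsum : p1 + p2 + p3 + p4 = 1)
    (hmax : ∀ q1 q2 q3 q4 : ℝ, 0 ≤ q1 → 0 ≤ q2 → 0 ≤ q3 → 0 ≤ q4 →
      q1 + q2 + q3 + q4 = 1 →
      v4 * q1 * q2 * q3 + v3 * q1 * q2 * q4 + v2 * q1 * q3 * q4 + v1 * q2 * q3 * q4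
        ≤ v4 * p1 * p2 * p3 + v3 * p1 * p2 * p4 + v2 * p1 * p3 * p4
          + v1 * p2 * p3 * p4) :
    p1 = p2 := by
  subst h12
  have hweight : 0 < v4 * p3 + v3 * p4 :=
    weight_pos_of_L_face_le hv3 hv4 hp3 hp4 (hmax _ _ _ _ (by norm_num) (by norm_num) (by norm_num)
      le_rfl (by norm_num))
  have hmean : L v1 v1 v3 v4 ((p1 + p2) / 2) ((p1 + p2) / 2) p3 p4 ≤ L v1 v1 v3 v4 p1 p2 p3 p4 :=
    hmax _ _ _ _ (by positivity) (by positivity) hp3 hp4 (by linarith)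
  have hgain : (p1 - p2) ^ 2 * (v4 * p3 + v3 * p4) ≤ 0 := by
    rw [← L_mean_sub]
    exact mul_nonpos_of_nonneg_of_nonpos (by norm_num) (sub_nonpos.mpr hmean)
  have hsq : (p1 - p2) ^ 2 ≤ 0 := nonpos_of_mul_nonpos_left hgain hweight
  exact sub_eq_zero.mp ((sq_nonpos_iff _).mp hsq)

/-- If all `vi > 0` and `v1 = v2`, then any maximizer `p` of `L(v,·)` over the
probability simplex satisfies `p1 = p2`. -/
theorem stmt5 (v1 v2 v3 v4 p1 p2 p3 p4 : ℝ)
    (hv1 : 0 < v1) (hv2 : 0 < v2) (hv3 : 0 < v3) (hv4 : 0 < v4)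
    (h12 : v1 = v2)
    (hp1 : 0 ≤ p1) (hp2 : 0 ≤ p2) (hp3 : 0 ≤ p3) (hp4 : 0 ≤ p4)
    (hsum : p1 + p2 + p3 + p4 = 1)
    (hmax : ∀ q1 q2 q3 q4 : ℝ, 0 ≤ q1 → 0 ≤ q2 → 0 ≤ q3 → 0 ≤ q4 →
      q1 + q2 + q3 + q4 = 1 →
      v4 * q1 * q2 * q3 + v3 * q1 * q2 * q4 + v2 * q1 * q3 * q4 + v1 * q2 * q3 * q4
        ≤ v4 * p1 * p2 * p3 + v3 * p1 * p2 * p4 + v2 * p1 * p3 * p4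
          + v1 * p2 * p3 * p4) :
    p1 = p2 :=
  stmt5_general v1 v2 v3 v4 p1 p2 p3 p4 hv3 hv4 h12 hp1 hp2 hp3 hp4 hsum hmax
end

section
/- Suppose v1 ≥ v2 > 0, v3 = v4 = v > 0, and v1 < v2 + 2v. Set δ = v1 + v2 − 4v and D = √(δ² + 12·v1·v2). Then the point p* with p1 = 1/2 − (v1 − v2 + 4v)/(2(−2δ + D)), p2 = 1/2 + (v1 − v2 − 4v)/(2(−2δ + D)), p3 = p4 = 2v/(−2δ + D) lies in the probability simplex and maximizes L((v1,v2,v,v),·) over the probability simplex, and the maximum value equals 2·v²·(δ² + 4·v1·v2 − δ·D)/(−2δ + D)³. -/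
/-!
Write `L = v q₁ q₂ (q₃ + q₄) + (v₂ q₁ + v₁ q₂) q₃ q₄` and `s = q₃ + q₄`. Replacing `q₃, q₄` by
their mean `s / 2` does not decrease `L`, and then `L` is a concave quadratic in `q₁` whose maximum
is a cubic profile `g(s)`, with `64 v g(s) = (δ² - 4 v₁ v₂) s³ + 8 v δ s² + 16 v² s`.
The critical root `u = -2δ + D` is the larger root of `u² + 4δu + 3δ² = 12 v₁ v₂`, and
`t = 4v / u = p₃ + p₄` is a critical point of `g`. Hence `g(t) - g(s)` is `(s - t)²` times a factor
linear in `s`, which is nonnegative at `s = 0` and at `s = 1`, so `g` is maximal at `t` on `[0, 1]`;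
`p*` is the point at which `L` equals `g(t)`.
-/

def objective (v1 v2 v q1 q2 q3 q4 : ℝ) : ℝ :=
  v * q1 * q2 * q3 + v * q1 * q2 * q4 + v2 * q1 * q3 * q4 + v1 * q2 * q3 * q4

noncomputable def optimalFirst (v1 v2 v s : ℝ) : ℝ := (1 - s) / 2 + s * (v2 - v1) / (8 * v)

noncomputable def profile (v1 v2 v s : ℝ) : ℝ :=
  objective v1 v2 v (optimalFirst v1 v2 v s) (1 - s - optimalFirst v1 v2 v s) (s / 2) (s / 2)

section

variable {v1 v2 v δ : ℝ}

lemma objective_le_objective_avg {q1 q2 : ℝ} (q3 q4 : ℝ) (h : 0 ≤ v2 * q1 + v1 * q2) :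
    objective v1 v2 v q1 q2 q3 q4
      ≤ objective v1 v2 v q1 q2 ((q3 + q4) / 2) ((q3 + q4) / 2) := by
  unfold objective
  nlinarith [mul_nonneg h (sq_nonneg (q3 - q4))]

lemma objective_avg_le_profile (hv : 0 < v) {s : ℝ} (hs : 0 ≤ s) (q1 : ℝ) :
    objective v1 v2 v q1 (1 - s - q1) (s / 2) (s / 2) ≤ profile v1 v2 v s := by
  have gap : profile v1 v2 v s - objective v1 v2 v q1 (1 - s - q1) (s / 2) (s / 2)
      = v * s * (q1 - optimalFirst v1 v2 v s) ^ 2 := by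
    unfold profile objective optimalFirst
    field_simp
    ring
  nlinarith [mul_nonneg (mul_nonneg hv.le hs) (sq_nonneg (q1 - optimalFirst v1 v2 v s))]

lemma one_sub_sub_optimalFirst (s : ℝ) :
    1 - s - optimalFirst v1 v2 v s = optimalFirst v2 v1 v s := by
  unfold optimalFirst; ring

lemma optimalFirst_nonneg {t u : ℝ} (hv : 0 < v) (ht0 : 0 ≤ t) (ht : t * u = 4 * v)
    (hu : v1 - v2 + 4 * v ≤ u) : 0 ≤ optimalFirst v1 v2 v t := by
  have factored : optimalFirst v1 v2 v t = t * (u - (v1 - v2 + 4 * v)) / (8 * v) := by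
    unfold optimalFirst
    field_simp
    linear_combination -2 * ht
  rw [factored]
  have hu' := sub_nonneg.2 hu
  positivity

lemma mul_profile_eq_cubic (hv : v ≠ 0) (hδ : δ = v1 + v2 - 4 * v) (s : ℝ) :
    64 * v * profile v1 v2 v s
      = (δ ^ 2 - 4 * v1 * v2) * s ^ 3 + 8 * v * δ * s ^ 2 + 16 * v ^ 2 * s := by
  unfold profile objective optimalFirst
  subst hδ
  field_simp
  ring

lemma profile_sub_profile (hv : v ≠ 0) (hδ : δ = v1 + v2 - 4 * v) {t : ℝ}
    (ht : 3 * (δ ^ 2 - 4 * v1 * v2) * t ^ 2 + 16 * v * δ * t + 16 * v ^ 2 = 0) (s : ℝ) :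
    64 * v * (profile v1 v2 v t - profile v1 v2 v s)
      = (s - t) ^ 2 * ((4 * v1 * v2 - δ ^ 2) * (s + 2 * t) - 8 * v * δ) := by
  linear_combination mul_profile_eq_cubic hv hδ t - mul_profile_eq_cubic hv hδ s + (t - s) * ht

lemma sub_add_le_critRoot {D : ℝ} (hv1 : 0 ≤ v1) (h : v1 ≤ v2 + 2 * v) (hδ : δ = v1 + v2 - 4 * v)
    (hD : D = √(δ ^ 2 + 12 * v1 * v2)) : v1 - v2 + 4 * v ≤ -2 * δ + D := by
  have hsq : (δ + 2 * v1) ^ 2 ≤ δ ^ 2 + 12 * v1 * v2 := by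
    subst hδ; nlinarith [mul_nonneg hv1 (by linarith : (0:ℝ) ≤ v2 + 2 * v - v1)]
  have hD_ge := (le_abs_self _).trans (Real.abs_le_sqrt hsq)
  subst hδ; linarith

lemma mul_sqrt_le_sq_add {D : ℝ} (hv1 : 0 ≤ v1) (hv2 : 0 ≤ v2) (h12 : v2 ≤ v1) (hδ : δ ≤ 2 * v2)
    (hD : D = √(δ ^ 2 + 12 * v1 * v2)) : δ * D ≤ δ ^ 2 + 4 * v1 * v2 := by
  rcases le_or_gt δ 0 with hδ0 | hδ0
  · nlinarith [mul_nonneg (neg_nonneg.2 hδ0) (hD ▸ Real.sqrt_nonneg _ : 0 ≤ D)]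
  · have hD2 : D ^ 2 = δ ^ 2 + 12 * v1 * v2 := hD ▸ Real.sq_sqrt (by positivity)
    have hδsq : δ ^ 2 ≤ 4 * v1 * v2 := by nlinarith
    rw [← sq_le_sq₀ (by positivity [hD ▸ Real.sqrt_nonneg _]) (by positivity)]
    nlinarith [mul_nonneg (mul_nonneg hv1 hv2) (sub_nonneg.2 hδsq)]

lemma profile_sub_profile_factor_nonneg {D t s : ℝ} (hv1 : 0 ≤ v1) (hv2 : 0 ≤ v2) (hv : 0 < v)
    (h12 : v2 ≤ v1) (hlt : v1 ≤ v2 + 2 * v) (hδ : δ = v1 + v2 - 4 * v)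
    (hD : D = √(δ ^ 2 + 12 * v1 * v2)) (ht : t * (-2 * δ + D) = 4 * v) (hs0 : 0 ≤ s) (hs1 : s ≤ 1) :
    0 ≤ (4 * v1 * v2 - δ ^ 2) * (s + 2 * t) - 8 * v * δ := by
  have hu : 0 < -2 * δ + D := by linarith [sub_add_le_critRoot hv1 hlt hδ hD]
  have hD0 : 0 ≤ D := hD ▸ Real.sqrt_nonneg _
  -- Multiplied by `u = -2δ + D`, the factor at `s = 0` is `8v (δ² + 4 v₁ v₂ - δD)`, and at `s = 1`
  -- it is `D (16v² - (v₁ - v₂)²)` plus a polynomial in `v₁, v₂, v`.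
  have at_zero : 0 ≤ (4 * v1 * v2 - δ ^ 2) * (0 + 2 * t) - 8 * v * δ := by
    refine nonneg_of_mul_nonneg_left ?_ hu
    have hδD := mul_sqrt_le_sq_add hv1 hv2 h12 (by linarith) hD
    linear_combination (8 * v) * hδD - (2 * (4 * v1 * v2 - δ ^ 2)) * ht
  have at_one : 0 ≤ (4 * v1 * v2 - δ ^ 2) * (1 + 2 * t) - 8 * v * δ := by
    refine nonneg_of_mul_nonneg_left ?_ hu
    have hdiff : 0 ≤ D * (16 * v ^ 2 - (v1 - v2) ^ 2) := mul_nonneg hD0 (by nlinarith)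
    subst hδ
    have hcubic : 0 ≤ 2 * (v1 + v2 - 4 * v) ^ 2 * (v1 + v2) + 8 * v1 * v2 * (8 * v - v1 - v2) := by
      rcases le_total (v1 + v2) (8 * v) with h | h
      · nlinarith [mul_nonneg (mul_nonneg hv1 hv2) (sub_nonneg.2 h)]
      · nlinarith [mul_nonneg (add_nonneg hv1 hv2) (sq_nonneg (4 * v)),
          mul_nonneg (sq_nonneg (v1 - v2)) (sub_nonneg.2 h)]
    linear_combination hcubic + hdiff - (2 * (4 * v1 * v2 - (v1 + v2 - 4 * v) ^ 2)) * ht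
  nlinarith [mul_nonneg (sub_nonneg.2 hs1) at_zero, mul_nonneg hs0 at_one]

lemma profile_le_profile_critPoint {D t s : ℝ} (hv1 : 0 ≤ v1) (hv2 : 0 ≤ v2) (hv : 0 < v)
    (h12 : v2 ≤ v1) (hlt : v1 ≤ v2 + 2 * v) (hδ : δ = v1 + v2 - 4 * v)
    (hD : D = √(δ ^ 2 + 12 * v1 * v2)) (ht : t * (-2 * δ + D) = 4 * v) (hs0 : 0 ≤ s)
    (hs1 : s ≤ 1) : profile v1 v2 v s ≤ profile v1 v2 v t := by
  have hu : 0 < -2 * δ + D := by linarith [sub_add_le_critRoot hv1 hlt hδ hD]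
  have hD2 : D ^ 2 = δ ^ 2 + 12 * v1 * v2 := hD ▸ Real.sq_sqrt (by positivity)
  have hcrit : 3 * (δ ^ 2 - 4 * v1 * v2) * t ^ 2 + 16 * v * δ * t + 16 * v ^ 2 = 0 := by
    have : (-2 * δ + D) ^ 2 * (3 * (δ ^ 2 - 4 * v1 * v2) * t ^ 2 + 16 * v * δ * t + 16 * v ^ 2)
        = 0 := by
      linear_combination (3 * (δ ^ 2 - 4 * v1 * v2) * (t * (-2 * δ + D) + 4 * v)
        + 16 * v * δ * (-2 * δ + D)) * ht + 16 * v ^ 2 * hD2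
    exact (mul_eq_zero.1 this).resolve_left (pow_ne_zero 2 hu.ne')
  have hfactor := profile_sub_profile_factor_nonneg hv1 hv2 hv h12 hlt hδ hD ht hs0 hs1
  nlinarith [profile_sub_profile hv.ne' hδ hcrit s, mul_nonneg (sq_nonneg (s - t)) hfactor]

lemma profile_critPoint_eq {D t : ℝ} (hv : v ≠ 0) (hδ : δ = v1 + v2 - 4 * v)
    (hD2 : D ^ 2 = δ ^ 2 + 12 * v1 * v2) (hu : -2 * δ + D ≠ 0) (ht : t * (-2 * δ + D) = 4 * v) :
    profile v1 v2 v t = 2 * v ^ 2 * (δ ^ 2 + 4 * v1 * v2 - δ * D) / (-2 * δ + D) ^ 3 := by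
  rw [eq_div_iff (pow_ne_zero 3 hu)]
  refine mul_left_cancel₀ (by positivity : (64 : ℝ) * v ≠ 0) ?_
  linear_combination (-2 * δ + D) ^ 3 * mul_profile_eq_cubic hv hδ t
    + ((δ ^ 2 - 4 * v1 * v2) * ((t * (-2 * δ + D)) ^ 2 + 4 * v * (t * (-2 * δ + D)) + 16 * v ^ 2)
      + 8 * v * δ * (-2 * δ + D) * (t * (-2 * δ + D) + 4 * v)
      + 16 * v ^ 2 * (-2 * δ + D) ^ 2) * ht + 64 * v ^ 3 * hD2

end

/-- Suppose `v1 ≥ v2 > 0`, `v3 = v4 = v > 0`, and `v1 < v2 + 2v`.  With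
`δ = v1 + v2 - 4v` and `D = √(δ² + 12·v1·v2)`, the point `p*` given by
`p1 = 1/2 - (v1-v2+4v)/(2(-2δ+D))`, `p2 = 1/2 + (v1-v2-4v)/(2(-2δ+D))`,
`p3 = p4 = 2v/(-2δ+D)` lies in the probability simplex and maximizes
`L((v1,v2,v,v),·)` there, with maximum value
`2·v²·(δ² + 4·v1·v2 - δ·D)/(-2δ+D)³`. -/
theorem stmt6 (v1 v2 v δ D p1 p2 p3 p4 : ℝ)
    (hv1 : 0 < v1) (hv2 : 0 < v2) (hv : 0 < v)
    (h12 : v2 ≤ v1) (hlt : v1 < v2 + 2 * v)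
    (hδ : δ = v1 + v2 - 4 * v)
    (hD : D = Real.sqrt (δ ^ 2 + 12 * v1 * v2))
    (hp1 : p1 = 1/2 - (v1 - v2 + 4 * v) / (2 * (-2 * δ + D)))
    (hp2 : p2 = 1/2 + (v1 - v2 - 4 * v) / (2 * (-2 * δ + D)))
    (hp3 : p3 = 2 * v / (-2 * δ + D))
    (hp4 : p4 = 2 * v / (-2 * δ + D)) :
    (0 ≤ p1 ∧ 0 ≤ p2 ∧ 0 ≤ p3 ∧ 0 ≤ p4 ∧ p1 + p2 + p3 + p4 = 1) ∧
    (∀ q1 q2 q3 q4 : ℝ, 0 ≤ q1 → 0 ≤ q2 → 0 ≤ q3 → 0 ≤ q4 →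
      q1 + q2 + q3 + q4 = 1 →
      v * q1 * q2 * q3 + v * q1 * q2 * q4 + v2 * q1 * q3 * q4 + v1 * q2 * q3 * q4
        ≤ v * p1 * p2 * p3 + v * p1 * p2 * p4 + v2 * p1 * p3 * p4
          + v1 * p2 * p3 * p4) ∧
    v * p1 * p2 * p3 + v * p1 * p2 * p4 + v2 * p1 * p3 * p4 + v1 * p2 * p3 * p4
      = 2 * v ^ 2 * (δ ^ 2 + 4 * v1 * v2 - δ * D) / (-2 * δ + D) ^ 3 := by
  have hu1 : v1 - v2 + 4 * v ≤ -2 * δ + D := sub_add_le_critRoot hv1.le hlt.le hδ hD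
  have hu2 : v2 - v1 + 4 * v ≤ -2 * δ + D :=
    sub_add_le_critRoot hv2.le (by linarith) (by rw [hδ]; ring) (by rw [hD, mul_right_comm 12 v1])
  have hu : 0 < -2 * δ + D := by linarith
  set t := 4 * v / (-2 * δ + D) with ht_def
  have ht : t * (-2 * δ + D) = 4 * v := div_mul_cancel₀ _ hu.ne'
  have ht0 : 0 ≤ t := by positivity
  obtain ⟨rfl, rfl, rfl, rfl⟩ : p1 = optimalFirst v1 v2 v t ∧ p2 = 1 - t - optimalFirst v1 v2 v t ∧
      p3 = t / 2 ∧ p4 = t / 2 := by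
    refine ⟨?_, ?_, ?_, ?_⟩ <;> simp only [hp1, hp2, hp3, hp4, ht_def, optimalFirst] <;>
      field_simp <;> ring
  refine ⟨⟨optimalFirst_nonneg hv ht0 ht hu1, ?_, by positivity, by positivity, by ring⟩, ?_, ?_⟩
  · rw [one_sub_sub_optimalFirst]
    exact optimalFirst_nonneg hv ht0 ht hu2
  · intro q1 q2 q3 q4 hq1 hq2 hq3 hq4 hsum
    obtain rfl : q2 = 1 - (q3 + q4) - q1 := by linarith
    calc objective v1 v2 v q1 (1 - (q3 + q4) - q1) q3 q4
        ≤ objective v1 v2 v q1 (1 - (q3 + q4) - q1) ((q3 + q4) / 2) ((q3 + q4) / 2) :=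
          objective_le_objective_avg q3 q4
            (add_nonneg (mul_nonneg hv2.le hq1) (mul_nonneg hv1.le hq2))
      _ ≤ profile v1 v2 v (q3 + q4) := objective_avg_le_profile hv (by positivity) q1
      _ ≤ profile v1 v2 v t :=
          profile_le_profile_critPoint hv1.le hv2.le hv h12 hlt.le hδ hD ht (by positivity)
            (by linarith)
  · exact profile_critPoint_eq hv.ne' hδ (hD ▸ Real.sq_sqrt (by positivity)) hu.ne' ht
end

section
/- Suppose v2 = v3 = v4 = v > 0, v1 > 0, and v1 < 3v. Then the point p* with p1 = (3v − v1)/(9v − v1) and p2 = p3 = p4 = 2v/(9v − v1) lies in the probability simplex and maximizes L((v1,v,v,v),·) over the probability simplex, and the maximum value equals 4·v³/(9v − v1)². -/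
/-!
Write `L = v·q₁·e₂(q₂,q₃,q₄) + v₁·e₃(q₂,q₃,q₄)`. For a fixed sum `q₂ + q₃ + q₄ = 3t`, the
elementary symmetric functions `e₂ ≤ 3t²` and `e₃ ≤ t³` are maximised at `q₂ = q₃ = q₄ = t`
(AM-GM), so it suffices to maximise the cubic `v(1 - 3t)·3t² + v₁t³` over `t ≥ 0`. With
`d = 9v - v₁`, one has `4v³ - d²·(v(1 - 3t)·3t² + v₁t³) = (td - 2v)²(td + v)`, a nonnegative
cubic with its double root at `t = 2v/d`.
-/

/-- `L((v₁, v, v, v), q)`. -/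
def symL (v v1 q1 q2 q3 q4 : ℝ) : ℝ :=
  v * q1 * q2 * q3 + v * q1 * q2 * q4 + v * q1 * q3 * q4 + v1 * q2 * q3 * q4

lemma mul_add_mul_add_mul_le_sq_div_three (a b c : ℝ) :
    a * b + a * c + b * c ≤ (a + b + c) ^ 2 / 3 := by
  nlinarith [sq_nonneg (a - b), sq_nonneg (a - c), sq_nonneg (b - c)]

lemma mul_mul_le_cube_div_27 {a b c : ℝ} (ha : 0 ≤ a) (hb : 0 ≤ b) (hc : 0 ≤ c) :
    a * b * c ≤ (a + b + c) ^ 3 / 27 := by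
  nlinarith [mul_nonneg ha (sq_nonneg (b - c)), mul_nonneg hb (sq_nonneg (a - c)),
    mul_nonneg hc (sq_nonneg (a - b)), mul_nonneg (mul_nonneg ha hb) hc]

lemma symL_le_symL_mean {v v1 q1 q2 q3 q4 : ℝ} (hv : 0 ≤ v) (hv1 : 0 ≤ v1) (hq1 : 0 ≤ q1)
    (hq2 : 0 ≤ q2) (hq3 : 0 ≤ q3) (hq4 : 0 ≤ q4) :
    let t := (q2 + q3 + q4) / 3
    symL v v1 q1 q2 q3 q4 ≤ symL v v1 q1 t t t := by
  have he2 := mul_add_mul_add_mul_le_sq_div_three q2 q3 q4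
  have he3 := mul_mul_le_cube_div_27 hq2 hq3 hq4
  have h2 := mul_le_mul_of_nonneg_left he2 (mul_nonneg hv hq1)
  have h3 := mul_le_mul_of_nonneg_left he3 hv1
  simp only [symL]
  linarith

lemma symL_diagonal_le {v v1 t : ℝ} (hv : 0 ≤ v) (hd : 0 < 9 * v - v1) (ht : 0 ≤ t) :
    symL v v1 (1 - 3 * t) t t t ≤ 4 * v ^ 3 / (9 * v - v1) ^ 2 := by
  rw [le_div_iff₀ (by positivity)]
  have hgap : 4 * v ^ 3 - symL v v1 (1 - 3 * t) t t t * (9 * v - v1) ^ 2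
      = (t * (9 * v - v1) - 2 * v) ^ 2 * (t * (9 * v - v1) + v) := by
    simp only [symL]; ring
  have : 0 ≤ (t * (9 * v - v1) - 2 * v) ^ 2 * (t * (9 * v - v1) + v) := by positivity
  linarith

lemma symL_maximizer {v v1 : ℝ} (hd : 9 * v - v1 ≠ 0) :
    symL v v1 ((3 * v - v1) / (9 * v - v1)) (2 * v / (9 * v - v1)) (2 * v / (9 * v - v1))
      (2 * v / (9 * v - v1)) = 4 * v ^ 3 / (9 * v - v1) ^ 2 := by
  obtain ⟨d, hd, rfl⟩ : ∃ d, d ≠ 0 ∧ v1 = 9 * v - d := ⟨_, hd, by ring⟩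
  simp only [symL, sub_sub_cancel]
  field_simp
  ring

/-- Suppose `v2 = v3 = v4 = v > 0`, `v1 > 0`, and `v1 < 3v`.  Then the point
`p*` with `p1 = (3v - v1)/(9v - v1)` and `p2 = p3 = p4 = 2v/(9v - v1)` lies in
the probability simplex and maximizes `L((v1,v,v,v),·)` there, with maximum
value `4·v³/(9v - v1)²`. -/
theorem stmt7 (v1 v p1 p2 p3 p4 : ℝ)
    (hv1 : 0 < v1) (hv : 0 < v) (hlt : v1 < 3 * v)
    (hp1 : p1 = (3 * v - v1) / (9 * v - v1))
    (hp2 : p2 = 2 * v / (9 * v - v1))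
    (hp3 : p3 = 2 * v / (9 * v - v1))
    (hp4 : p4 = 2 * v / (9 * v - v1)) :
    (0 ≤ p1 ∧ 0 ≤ p2 ∧ 0 ≤ p3 ∧ 0 ≤ p4 ∧ p1 + p2 + p3 + p4 = 1) ∧
    (∀ q1 q2 q3 q4 : ℝ, 0 ≤ q1 → 0 ≤ q2 → 0 ≤ q3 → 0 ≤ q4 →
      q1 + q2 + q3 + q4 = 1 →
      v * q1 * q2 * q3 + v * q1 * q2 * q4 + v * q1 * q3 * q4 + v1 * q2 * q3 * q4
        ≤ v * p1 * p2 * p3 + v * p1 * p2 * p4 + v * p1 * p3 * p4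
          + v1 * p2 * p3 * p4) ∧
    v * p1 * p2 * p3 + v * p1 * p2 * p4 + v * p1 * p3 * p4 + v1 * p2 * p3 * p4
      = 4 * v ^ 3 / (9 * v - v1) ^ 2 := by
  have hd : 0 < 9 * v - v1 := by linarith
  have hmax : symL v v1 p1 p2 p3 p4 = 4 * v ^ 3 / (9 * v - v1) ^ 2 := by
    subst hp1 hp2 hp3 hp4
    exact symL_maximizer hd.ne'
  refine ⟨?_, fun q1 q2 q3 q4 hq1 hq2 hq3 hq4 hsum => ?_, hmax⟩
  · subst hp1 hp2 hp3 hp4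
    refine ⟨div_nonneg (by linarith) hd.le, by positivity, by positivity, by positivity, ?_⟩
    rw [← add_div, ← add_div, ← add_div, div_eq_one_iff_eq hd.ne']
    ring
  · have hq1' : q1 = 1 - 3 * ((q2 + q3 + q4) / 3) := by linarith
    calc symL v v1 q1 q2 q3 q4
        ≤ symL v v1 q1 _ _ _ := symL_le_symL_mean hv.le hv1.le hq1 hq2 hq3 hq4
      _ ≤ 4 * v ^ 3 / (9 * v - v1) ^ 2 := hq1' ▸ symL_diagonal_le hv.le hd (by positivity)
      _ = symL v v1 p1 p2 p3 p4 := hmax.symm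
end

section
/- Suppose v1 = v2 = u > 0, v3 = v4 = v > 0, and u > v. Set d = √(u² − u·v + v²). Then the point p* with p1 = p2 = (2u − v − d)/(6(u − v)) and p3 = p4 = (u − 2v + d)/(6(u − v)) lies in the probability simplex and maximizes L((u,u,v,v),·) over the probability simplex, and the maximum value equals (2u − v − d)·(u − 2v + d)·(u + v + d)/(108·(u − v)²). -/
set_option maxHeartbeats 1600000 in
/-- Suppose `v1 = v2 = u > 0`, `v3 = v4 = v > 0`, and `u > v`.  With
`d = √(u² - u·v + v²)`, the point `p*` with `p1 = p2 = (2u - v - d)/(6(u - v))`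
and `p3 = p4 = (u - 2v + d)/(6(u - v))` lies in the probability simplex and
maximizes `L((u,u,v,v),·)` there, with maximum value
`(2u - v - d)·(u - 2v + d)·(u + v + d)/(108·(u - v)²)`. -/
theorem stmt8 (u v d p1 p2 p3 p4 : ℝ)
    (hu : 0 < u) (hv : 0 < v) (huv : v < u)
    (hd : d = Real.sqrt (u ^ 2 - u * v + v ^ 2))
    (hp1 : p1 = (2 * u - v - d) / (6 * (u - v)))
    (hp2 : p2 = (2 * u - v - d) / (6 * (u - v)))
    (hp3 : p3 = (u - 2 * v + d) / (6 * (u - v)))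
    (hp4 : p4 = (u - 2 * v + d) / (6 * (u - v))) :
    (0 ≤ p1 ∧ 0 ≤ p2 ∧ 0 ≤ p3 ∧ 0 ≤ p4 ∧ p1 + p2 + p3 + p4 = 1) ∧
    (∀ q1 q2 q3 q4 : ℝ, 0 ≤ q1 → 0 ≤ q2 → 0 ≤ q3 → 0 ≤ q4 →
      q1 + q2 + q3 + q4 = 1 →
      v * q1 * q2 * q3 + v * q1 * q2 * q4 + u * q1 * q3 * q4 + u * q2 * q3 * q4
        ≤ v * p1 * p2 * p3 + v * p1 * p2 * p4 + u * p1 * p3 * p4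
          + u * p2 * p3 * p4) ∧
    v * p1 * p2 * p3 + v * p1 * p2 * p4 + u * p1 * p3 * p4 + u * p2 * p3 * p4
      = (2 * u - v - d) * (u - 2 * v + d) * (u + v + d) / (108 * (u - v) ^ 2) := by
  have hw : (0:ℝ) < u - v := by linarith
  have hd2 : d ^ 2 = u ^ 2 - u * v + v ^ 2 := by
    rw [hd, Real.sq_sqrt]; nlinarith [sq_nonneg (u - v)]
  have hd0 : 0 ≤ d := by rw [hd]; exact Real.sqrt_nonneg _
  have hdv : v < d := by nlinarith
  have hdu : d < u := by nlinarith
  -- numerators are positive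
  have hN1 : 0 < 2 * u - v - d := by linarith
  have hN3 : 0 < u - 2 * v + d := by linarith
  -- the final value equality (pure algebra)
  have hval : v * p1 * p2 * p3 + v * p1 * p2 * p4 + u * p1 * p3 * p4 + u * p2 * p3 * p4
      = (2 * u - v - d) * (u - 2 * v + d) * (u + v + d) / (108 * (u - v) ^ 2) := by
    rw [hp1, hp2, hp3, hp4]
    field_simp
    ring
  refine ⟨⟨?_, ?_, ?_, ?_, ?_⟩, ?_, hval⟩
  · rw [hp1]; positivity
  · rw [hp2]; positivity
  · rw [hp3]; positivity
  · rw [hp4]; positivity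
  · rw [hp1, hp2, hp3, hp4]; field_simp; ring
  · intro q1 q2 q3 q4 h1 h2 h3 h4 hsum
    rw [hval]
    set A := q1 + q2 with hA
    have hA0 : 0 ≤ A := by positivity
    have hA1 : A ≤ 1 := by nlinarith
    -- Step 1: L(q) ≤ (1/4) A (1-A) (u - (u-v) A)
    have step1 : v * q1 * q2 * q3 + v * q1 * q2 * q4 + u * q1 * q3 * q4 + u * q2 * q3 * q4
        ≤ (1/4) * (A * (1 - A) * (u - (u - v) * A)) := by
      have hq12 : q1 * q2 ≤ (A / 2) ^ 2 := by nlinarith [sq_nonneg (q1 - q2)]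
      have hq34 : q3 * q4 ≤ ((1 - A) / 2) ^ 2 := by nlinarith [sq_nonneg (q3 - q4)]
      have hB0 : 0 ≤ 1 - A := by linarith
      have hB : q3 + q4 = 1 - A := by linarith
      have hL : v * q1 * q2 * q3 + v * q1 * q2 * q4 + u * q1 * q3 * q4 + u * q2 * q3 * q4
          = v * (q1 * q2) * (1 - A) + u * (q3 * q4) * A := by
        linear_combination v * (q1 * q2) * hB - u * (q3 * q4) * hA
      rw [hL]
      have e1 : v * (q1 * q2) * (1 - A) ≤ v * ((A / 2) ^ 2) * (1 - A) := by
        have := mul_le_mul_of_nonneg_left hq12 (le_of_lt hv)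
        exact mul_le_mul_of_nonneg_right this hB0
      have e2 : u * (q3 * q4) * A ≤ u * (((1 - A) / 2) ^ 2) * A := by
        have := mul_le_mul_of_nonneg_left hq34 (le_of_lt hu)
        exact mul_le_mul_of_nonneg_right this hA0
      have : v * ((A / 2) ^ 2) * (1 - A) + u * (((1 - A) / 2) ^ 2) * A
          = (1/4) * (A * (1 - A) * (u - (u - v) * A)) := by ring
      linarith
    -- Step 2: the cubic bound
    have hc : 0 ≤ 2 * u - v + 2 * d - 3 * (u - v) * A := by
      have h2d : u - 2 * v ≤ 2 * d := by nlinarith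
      nlinarith [mul_le_mul_of_nonneg_left hA1 (le_of_lt hw)]
    have key : 27 * (u - v) ^ 2 * (A * (1 - A) * (u - (u - v) * A))
        ≤ (2 * u - v - d) * (u - 2 * v + d) * (u + v + d) := by
      have hid : (2 * u - v - d) * (u - 2 * v + d) * (u + v + d)
          - 27 * (u - v) ^ 2 * (A * (1 - A) * (u - (u - v) * A))
          = (3 * (u - v) * A - (2 * u - v - d)) ^ 2
              * (2 * u - v + 2 * d - 3 * (u - v) * A) := by
        linear_combination (3 * (2 * u - v - d - 3 * (u - v) * A)) * hd2
      linarith [hid, mul_nonneg (sq_nonneg (3 * (u - v) * A - (2 * u - v - d))) hc]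
    have h108 : (0:ℝ) < 108 * (u - v) ^ 2 := by positivity
    calc v * q1 * q2 * q3 + v * q1 * q2 * q4 + u * q1 * q3 * q4 + u * q2 * q3 * q4
        ≤ (1/4) * (A * (1 - A) * (u - (u - v) * A)) := step1
      _ = 27 * (u - v) ^ 2 * (A * (1 - A) * (u - (u - v) * A)) / (108 * (u - v) ^ 2) := by
          field_simp; ring
      _ ≤ (2 * u - v - d) * (u - 2 * v + d) * (u + v + d) / (108 * (u - v) ^ 2) :=
          (div_le_div_iff_of_pos_right h108).mpr key
end

section
/- Let β0, β1, β2 be real numbers. Then the saturation condition 2/min{w1,w2,w3,w4} ≥ 1/w1 + 1/w2 + 1/w3 + 1/w4 holds if and only if β0 ≠ 0, |β1| > (1/2)·log((e^{2|β0|}+1)/(e^{2|β0|}−1)), and |β2| ≥ log( (2·e^{|β0|+|β1|} + √((e^{4|β0|}−1)(e^{4|β1|}−1))) / ((e^{2|β0|}−1)(e^{2|β1|}−1) − 2) ). -/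
/-!
For the logit link `1 / w = 2 + 2 cosh η`. Since `cosh` is even and increasing on `[0, ∞)`, the
smallest weight belongs to the predictor of largest modulus, which is `|β0| + |β1| + |β2|`, while
`∑ cosh ηᵢ = 4 cosh β0 cosh β1 cosh β2`. The saturation condition thus reads
`1 + 2 cosh a cosh b cosh c ≤ cosh (a + b + c)` with `a, b, c = |β0|, |β1|, |β2|`. Multiplied by
`4 eᵃ eᵇ eᶜ`, this is `0 ≤ d r² - 4 eᵃ eᵇ r - E` in `r = eᶜ` with `E > 0`: it holds iff the leading
coefficient `d = (e^{2a} - 1)(e^{2b} - 1) - 2` is positive (the conditions on `β0` and `β1`) and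
`r` lies beyond the positive root (the condition on `β2`).
-/

open Real

theorem max_abs_add_abs_sub (u v : ℝ) : max |u + v| |u - v| = |u| + |v| := by
  grind [abs_cases]

theorem cosh_add_add_add_cosh_sub_sub (x y z : ℝ) :
    cosh (x + y + z) + cosh (x + y - z) + cosh (x - y + z) + cosh (x - y - z)
      = 4 * cosh x * cosh y * cosh z := by
  simp only [cosh_add, cosh_sub, sinh_add, sinh_sub]
  ring

theorem nonneg_quadratic_iff {a b c x : ℝ} (hb : 0 ≤ b) (hc : 0 < c) (hx : 0 < x) :
    0 ≤ a * x ^ 2 - 2 * b * x - c ↔ 0 < a ∧ b + √(b ^ 2 + a * c) ≤ a * x := by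
  have hcompl : a * (a * x ^ 2 - 2 * b * x - c) = (a * x - b) ^ 2 - (b ^ 2 + a * c) := by ring
  -- The other root `(b - √(b ^ 2 + a * c)) / a` is negative, hence below `x`.
  constructor
  · intro hQ
    have ha : 0 < a := by
      by_contra! ha
      nlinarith [mul_nonpos_of_nonpos_of_nonneg ha (sq_nonneg x)]
    have hD : b ^ 2 < b ^ 2 + a * c := by nlinarith
    have hsb : b < √(b ^ 2 + a * c) := (lt_sqrt hb).2 hD
    have hs := sq_sqrt ((sq_nonneg b).trans hD.le)
    refine ⟨ha, le_of_not_gt fun hlt => ?_⟩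
    have hpos : 0 < a * x - b + √(b ^ 2 + a * c) := by nlinarith [mul_pos ha hx]
    nlinarith [mul_nonneg ha.le hQ, mul_pos (sub_pos.2 hlt) hpos]
  · rintro ⟨ha, hroot⟩
    have hs := sq_sqrt (add_nonneg (sq_nonneg b) (mul_nonneg ha.le hc.le))
    have : b ^ 2 + a * c ≤ (a * x - b) ^ 2 := by
      rw [← hs]
      exact pow_le_pow_left₀ (sqrt_nonneg _) (by linarith) 2
    exact (mul_nonneg_iff_of_pos_left ha).1 (by linarith)

noncomputable def logitWeight (η : ℝ) : ℝ := exp η / (1 + exp η) ^ 2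

theorem logitWeight_pos (η : ℝ) : 0 < logitWeight η := by
  unfold logitWeight
  positivity

theorem inv_logitWeight (η : ℝ) : (logitWeight η)⁻¹ = 2 + 2 * cosh η := by
  rw [logitWeight, cosh_eq, exp_neg]
  field_simp
  ring

theorem logitWeight_abs (η : ℝ) : logitWeight |η| = logitWeight η := by
  rw [← inv_inj, inv_logitWeight, inv_logitWeight, cosh_abs]

theorem logitWeight_le_logitWeight_iff {x y : ℝ} :
    logitWeight x ≤ logitWeight y ↔ |y| ≤ |x| := by
  rw [← inv_le_inv₀ (logitWeight_pos y) (logitWeight_pos x), inv_logitWeight, inv_logitWeight,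
    ← cosh_le_cosh]
  constructor <;> intro h <;> linarith

theorem min_logitWeight (x y : ℝ) :
    min (logitWeight x) (logitWeight y) = logitWeight (max |x| |y|) := by
  rcases le_total |x| |y| with h | h
  · rw [max_eq_right h, logitWeight_abs, min_eq_right (logitWeight_le_logitWeight_iff.2 h)]
  · rw [max_eq_left h, logitWeight_abs, min_eq_left (logitWeight_le_logitWeight_iff.2 h)]

theorem min_logitWeight_four (x y z : ℝ) :
    min (min (logitWeight (x + y + z)) (logitWeight (x + y - z)))
        (min (logitWeight (x - y + z)) (logitWeight (x - y - z)))
      = logitWeight (|x| + |y| + |z|) := by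
  rw [min_logitWeight, min_logitWeight, max_abs_add_abs_sub, max_abs_add_abs_sub, min_logitWeight,
    abs_of_nonneg (a := |x + y| + |z|) (by positivity),
    abs_of_nonneg (a := |x - y| + |z|) (by positivity), max_add_add_right,
    max_abs_add_abs_sub]

theorem saturation_iff_cosh (x y z : ℝ) :
    2 / min (min (logitWeight (x + y + z)) (logitWeight (x + y - z)))
        (min (logitWeight (x - y + z)) (logitWeight (x - y - z))) ≥
      1 / logitWeight (x + y + z) + 1 / logitWeight (x + y - z)
        + 1 / logitWeight (x - y + z) + 1 / logitWeight (x - y - z) ↔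
    1 + 2 * cosh x * cosh y * cosh z ≤ cosh (|x| + |y| + |z|) := by
  rw [min_logitWeight_four, div_eq_mul_inv]
  simp only [one_div, inv_logitWeight]
  have := cosh_add_add_add_cosh_sub_sub x y z
  constructor <;> intro h <;> linarith

theorem four_mul_exp_mul_cosh_sub (a b c : ℝ) :
    4 * (exp a * exp b * exp c) * (cosh (a + b + c) - (1 + 2 * cosh a * cosh b * cosh c))
      = ((exp a ^ 2 - 1) * (exp b ^ 2 - 1) - 2) * exp c ^ 2 - 2 * (2 * (exp a * exp b)) * exp c
        - ((exp a ^ 2 + 1) * (exp b ^ 2 + 1) - 2) := by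
  simp only [cosh_eq, exp_add, exp_neg]
  field_simp
  ring

theorem exp_two_mul (x : ℝ) : exp (2 * x) = exp x ^ 2 := by
  rw [← exp_nat_mul]; norm_num

theorem exp_four_mul (x : ℝ) : exp (4 * x) = exp x ^ 4 := by
  rw [← exp_nat_mul]; norm_num

theorem mul_exp_sq_sub_one_sub_two_pos_iff {a b : ℝ} (ha : 0 ≤ a) :
    0 < (exp a ^ 2 - 1) * (exp b ^ 2 - 1) - 2 ↔
      a ≠ 0 ∧ b > 1 / 2 * log ((exp a ^ 2 + 1) / (exp a ^ 2 - 1)) := by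
  rcases ha.eq_or_lt with rfl | ha
  · simp
  have hP : 0 < exp a ^ 2 - 1 := sub_pos.2 (one_lt_pow₀ (one_lt_exp_iff.2 ha) two_ne_zero)
  calc 0 < (exp a ^ 2 - 1) * (exp b ^ 2 - 1) - 2
      ↔ (exp a ^ 2 + 1) / (exp a ^ 2 - 1) < exp b ^ 2 := by
        rw [div_lt_iff₀ hP]
        constructor <;> intro h <;> linarith
    _ ↔ log ((exp a ^ 2 + 1) / (exp a ^ 2 - 1)) < 2 * b := by
        rw [log_lt_iff_lt_exp (by positivity), exp_two_mul]
    _ ↔ _ := by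
        simp only [ne_eq, ha.ne', not_false_eq_true, true_and, gt_iff_lt]
        constructor <;> intro h <;> linarith

theorem one_add_two_mul_cosh_mul_cosh_mul_cosh_le_cosh_add_add_iff {a b c : ℝ} (ha : 0 ≤ a) :
    1 + 2 * cosh a * cosh b * cosh c ≤ cosh (a + b + c) ↔
      a ≠ 0 ∧ b > 1 / 2 * log ((exp (2 * a) + 1) / (exp (2 * a) - 1)) ∧
      c ≥ log ((2 * exp (a + b) + √((exp (4 * a) - 1) * (exp (4 * b) - 1)))
        / ((exp (2 * a) - 1) * (exp (2 * b) - 1) - 2)) := by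
  have hE : 0 < (exp a ^ 2 + 1) * (exp b ^ 2 + 1) - 2 := by
    nlinarith [one_le_exp ha, exp_pos b]
  have hdisc : (2 * (exp a * exp b)) ^ 2
      + ((exp a ^ 2 - 1) * (exp b ^ 2 - 1) - 2) * ((exp a ^ 2 + 1) * (exp b ^ 2 + 1) - 2)
      = (exp a ^ 4 - 1) * (exp b ^ 4 - 1) := by ring
  rw [← sub_nonneg, ← mul_nonneg_iff_of_pos_left (by positivity : 0 < 4 * (exp a * exp b * exp c)),
    four_mul_exp_mul_cosh_sub, nonneg_quadratic_iff (by positivity) hE (exp_pos c), hdisc,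
    exp_two_mul, exp_two_mul, exp_four_mul, exp_four_mul, exp_add, ← and_assoc, ← mul_exp_sq_sub_one_sub_two_pos_iff ha]
  refine and_congr_right fun hd => ?_
  rw [ge_iff_le, log_le_iff_le_exp (by positivity), div_le_iff₀ hd, mul_comm (exp c)]

/-- For the logit link with linear predictors `ηi` and weights
`wi = e^{ηi}/(1+e^{ηi})²`, the saturation condition
`2/min{w1,w2,w3,w4} ≥ 1/w1 + 1/w2 + 1/w3 + 1/w4` holds iff `β0 ≠ 0`,
`|β1| > (1/2)·log((e^{2|β0|}+1)/(e^{2|β0|}-1))`, and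
`|β2| ≥ log((2·e^{|β0|+|β1|} + √((e^{4|β0|}-1)(e^{4|β1|}-1)))
            /((e^{2|β0|}-1)(e^{2|β1|}-1)-2))`. -/
theorem stmt9 (β0 β1 β2 η1 η2 η3 η4 w1 w2 w3 w4 : ℝ)
    (hη1 : η1 = β0 + β1 + β2) (hη2 : η2 = β0 + β1 - β2)
    (hη3 : η3 = β0 - β1 + β2) (hη4 : η4 = β0 - β1 - β2)
    (hw1 : w1 = Real.exp η1 / (1 + Real.exp η1) ^ 2)
    (hw2 : w2 = Real.exp η2 / (1 + Real.exp η2) ^ 2)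
    (hw3 : w3 = Real.exp η3 / (1 + Real.exp η3) ^ 2)
    (hw4 : w4 = Real.exp η4 / (1 + Real.exp η4) ^ 2) :
    2 / min (min w1 w2) (min w3 w4) ≥ 1 / w1 + 1 / w2 + 1 / w3 + 1 / w4
    ↔ (β0 ≠ 0 ∧
       |β1| > (1/2) * Real.log ((Real.exp (2 * |β0|) + 1)
         / (Real.exp (2 * |β0|) - 1)) ∧
       |β2| ≥ Real.log ((2 * Real.exp (|β0| + |β1|)
           + Real.sqrt ((Real.exp (4 * |β0|) - 1) * (Real.exp (4 * |β1|) - 1)))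
         / ((Real.exp (2 * |β0|) - 1) * (Real.exp (2 * |β1|) - 1) - 2))) := by
  subst hη1 hη2 hη3 hη4 hw1 hw2 hw3 hw4
  refine (saturation_iff_cosh β0 β1 β2).trans ?_
  rw [← cosh_abs β0, ← cosh_abs β1, ← cosh_abs β2,
    one_add_two_mul_cosh_mul_cosh_mul_cosh_le_cosh_add_add_iff (abs_nonneg β0), abs_ne_zero]
end

section
/- Suppose 0 < v1 < v2 < v3 < v4 and v4 < v1 + v2 + v3. Then Lmax[v1,v2,v3,v4] − max{L12, L23, L34} ≤ min{ (v2−v1)/216, (v3−v2)/(96·√3), (v4−v3)/54 }. -/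
/-- `Lmax4 v1 v2 v3 v4` is the supremum of
`L(v,p) = v4·p1·p2·p3 + v3·p1·p2·p4 + v2·p1·p3·p4 + v1·p2·p3·p4`
over the probability simplex. -/
noncomputable def Lmax4 (v1 v2 v3 v4 : ℝ) : ℝ :=
  sSup {x : ℝ | ∃ p1 p2 p3 p4 : ℝ, 0 ≤ p1 ∧ 0 ≤ p2 ∧ 0 ≤ p3 ∧ 0 ≤ p4 ∧
    p1 + p2 + p3 + p4 = 1 ∧
    x = v4 * p1 * p2 * p3 + v3 * p1 * p2 * p4 + v2 * p1 * p3 * p4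
        + v1 * p2 * p3 * p4}

/-- Evaluation at any simplex point is a lower bound for `Lmax4`. -/
lemma L_le_Lmax4 (w1 w2 w3 w4 p1 p2 p3 p4 : ℝ)
    (hw1 : 0 ≤ w1) (hw2 : 0 ≤ w2) (hw3 : 0 ≤ w3) (hw4 : 0 ≤ w4)
    (h1 : 0 ≤ p1) (h2 : 0 ≤ p2) (h3 : 0 ≤ p3) (h4 : 0 ≤ p4)
    (hs : p1 + p2 + p3 + p4 = 1) :
    w4 * p1 * p2 * p3 + w3 * p1 * p2 * p4 + w2 * p1 * p3 * p4
        + w1 * p2 * p3 * p4 ≤ Lmax4 w1 w2 w3 w4 := by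
  apply le_csSup
  · refine ⟨w1 + w2 + w3 + w4, ?_⟩
    rintro x ⟨q1, q2, q3, q4, hq1, hq2, hq3, hq4, hqs, rfl⟩
    have e1 : q1 ≤ 1 := by linarith
    have e2 : q2 ≤ 1 := by linarith
    have e3 : q3 ≤ 1 := by linarith
    have e4 : q4 ≤ 1 := by linarith
    have m12 : q1*q2 ≤ 1 := by nlinarith [mul_nonneg hq1 (sub_nonneg.2 e2)]
    have m13 : q1*q3 ≤ 1 := by nlinarith [mul_nonneg hq1 (sub_nonneg.2 e3)]
    have m23 : q2*q3 ≤ 1 := by nlinarith [mul_nonneg hq2 (sub_nonneg.2 e3)]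
    have m123 : q1*q2*q3 ≤ 1 := by nlinarith [mul_nonneg (mul_nonneg hq1 hq2) (sub_nonneg.2 e3)]
    have m124 : q1*q2*q4 ≤ 1 := by nlinarith [mul_nonneg (mul_nonneg hq1 hq2) (sub_nonneg.2 e4)]
    have m134 : q1*q3*q4 ≤ 1 := by nlinarith [mul_nonneg (mul_nonneg hq1 hq3) (sub_nonneg.2 e4)]
    have m234 : q2*q3*q4 ≤ 1 := by nlinarith [mul_nonneg (mul_nonneg hq2 hq3) (sub_nonneg.2 e4)]
    nlinarith [mul_nonneg hw4 (sub_nonneg.2 m123), mul_nonneg hw3 (sub_nonneg.2 m124),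
      mul_nonneg hw2 (sub_nonneg.2 m134), mul_nonneg hw1 (sub_nonneg.2 m234)]
  · exact ⟨p1, p2, p3, p4, h1, h2, h3, h4, hs, rfl⟩

lemma Lmax4_nonneg (w1 w2 w3 w4 : ℝ)
    (hw1 : 0 ≤ w1) (hw2 : 0 ≤ w2) (hw3 : 0 ≤ w3) (hw4 : 0 ≤ w4) :
    0 ≤ Lmax4 w1 w2 w3 w4 := by
  have := L_le_Lmax4 w1 w2 w3 w4 1 0 0 0 hw1 hw2 hw3 hw4
    (by norm_num) (by norm_num) (by norm_num) (by norm_num) (by norm_num)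
  linarith [this]

lemma Lmax4_le (w1 w2 w3 w4 B : ℝ) (hB : 0 ≤ B)
    (h : ∀ p1 p2 p3 p4 : ℝ, 0 ≤ p1 → 0 ≤ p2 → 0 ≤ p3 → 0 ≤ p4 →
      p1 + p2 + p3 + p4 = 1 →
      w4 * p1 * p2 * p3 + w3 * p1 * p2 * p4 + w2 * p1 * p3 * p4
        + w1 * p2 * p3 * p4 ≤ B) :
    Lmax4 w1 w2 w3 w4 ≤ B := by
  apply Real.sSup_le _ hB
  rintro x ⟨q1, q2, q3, q4, hq1, hq2, hq3, hq4, hqs, rfl⟩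
  exact h q1 q2 q3 q4 hq1 hq2 hq3 hq4 hqs

/-- key pure-simplex inequality for the `(v2-v1)/216` bound. -/
lemma psi_le (p1 p2 p3 p4 : ℝ) (h1 : 0 ≤ p1) (h2 : 0 ≤ p2) (h3 : 0 ≤ p3) (h4 : 0 ≤ p4)
    (hs : p1 + p2 + p3 + p4 = 1) (h32 : p3 ≤ p2) :
    p3*p4*(p1-p2) - (p3+p4)*(p1-p2)^2/2 ≤ 1/108 := by
  rcases le_total (p3 + p4) (2/3) with hc | hc
  · rcases le_or_gt (p3*p4*(p1-p2)) (1/108) with hqd | hqd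
    · nlinarith [mul_nonneg (add_nonneg h3 h4) (sq_nonneg (p1-p2))]
    · have hq : 1/108 < p3*p4 := by
        nlinarith [mul_nonneg (mul_nonneg h3 h4) (add_nonneg h2 (add_nonneg h3 h4))]
      have hs18 : 1/18 ≤ p3 + p4 := by nlinarith [sq_nonneg (p3-p4), add_nonneg h3 h4]
      have hA : ((p3+p4)*(p1-p2) - p3*p4)^2 ≥ 0 := sq_nonneg _
      have hB : (p3+p4)^4/16 - (p3*p4)^2 ≥ 0 := by
        nlinarith [sq_nonneg (p3-p4), mul_nonneg h3 h4, sq_nonneg (p3+p4)]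
      have hC : (p3+p4)/54 - (p3+p4)^4/16 ≥ 0 := by
        nlinarith [mul_nonneg (mul_nonneg (add_nonneg h3 h4)
          (by linarith : (0:ℝ) ≤ 2 - 3*(p3+p4)))
          (by nlinarith [sq_nonneg (p3+p4)] : (0:ℝ) ≤ 4 + 6*(p3+p4) + 9*(p3+p4)^2)]
      nlinarith [hA, hB, hC, sub_nonneg.2 hs18, add_nonneg h3 h4]
  · rcases le_total (p1 - p2) 0 with hd | hd
    · nlinarith [mul_nonneg (mul_nonneg h3 h4) (neg_nonneg.2 hd),
        mul_nonneg (add_nonneg h3 h4) (sq_nonneg (p1-p2))]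
    · have key : (p3+p4)*(p1-p2)*(p1+p2-(p1-p2))/2 ≤ 1/108 := by
        nlinarith [mul_nonneg hd h2, sq_nonneg (p1-p2-1/6),
          mul_nonneg (mul_nonneg hd h2) (sub_nonneg.2 hc),
          sq_nonneg (p1+p2-1/3), mul_nonneg h1 h2]
      nlinarith [mul_nonneg (mul_nonneg h2 h4) hd,
        mul_nonneg (mul_nonneg (sub_nonneg.2 h32) h4) hd,
        sq_nonneg (p1-p2), add_nonneg h3 h4, mul_nonneg h4 hd]

/-- key pure-simplex inequality for the `(v3-v2)/(96√3)` bound. -/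
lemma chi_le (p1 p2 p3 p4 : ℝ) (h1 : 0 ≤ p1) (h2 : 0 ≤ p2) (h3 : 0 ≤ p3) (h4 : 0 ≤ p4)
    (hs : p1 + p2 + p3 + p4 = 1) (h43 : p4 ≤ p3) :
    p1*p4*(p2-p3) - p1*(p2-p3)^2/2 ≤ 1/100 := by
  nlinarith [sq_nonneg (p2-p3-p4), mul_nonneg h1 h4, sq_nonneg (p2-p3),
    mul_nonneg h1 (sq_nonneg (p2-p3-p4)), sq_nonneg (p1-1/3), sq_nonneg (p4-1/5),
    mul_nonneg (mul_nonneg h1 h4) (sub_nonneg.2 h43)]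

set_option maxHeartbeats 2000000 in
/-- If `0 < v1 < v2 < v3 < v4` and `v4 < v1 + v2 + v3`, then
`Lmax[v1,v2,v3,v4] − max{L12, L23, L34}
  ≤ min{(v2−v1)/216, (v3−v2)/(96·√3), (v4−v3)/54}`. -/
theorem stmt11 (v1 v2 v3 v4 : ℝ)
    (hv1 : 0 < v1) (h12 : v1 < v2) (h23 : v2 < v3) (h34 : v3 < v4)
    (hsat : v4 < v1 + v2 + v3) :
    Lmax4 v1 v2 v3 v4
      - max (max (Lmax4 ((v1 + v2)/2) ((v1 + v2)/2) v3 v4)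
                 (Lmax4 v1 ((v2 + v3)/2) ((v2 + v3)/2) v4))
            (Lmax4 v1 v2 ((v3 + v4)/2) ((v3 + v4)/2))
    ≤ min (min ((v2 - v1) / 216) ((v3 - v2) / (96 * Real.sqrt 3)))
          ((v4 - v3) / 54) := by
  set L12 := Lmax4 ((v1 + v2)/2) ((v1 + v2)/2) v3 v4 with hL12
  set L23 := Lmax4 v1 ((v2 + v3)/2) ((v2 + v3)/2) v4 with hL23
  set L34 := Lmax4 v1 v2 ((v3 + v4)/2) ((v3 + v4)/2) with hL34
  have hm12 : L12 ≤ max (max L12 L23) L34 := (le_max_left L12 L23).trans (le_max_left _ L34)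
  have hm23 : L23 ≤ max (max L12 L23) L34 := (le_max_right L12 L23).trans (le_max_left _ L34)
  have hm34 : L34 ≤ max (max L12 L23) L34 := le_max_right _ _
  have hMnn : 0 ≤ max (max L12 L23) L34 :=
    (Lmax4_nonneg _ _ _ _ (by linarith) (by linarith) (by linarith) (by linarith)).trans hm34
  have hsqrt3 : Real.sqrt 3 ≤ 2 := by
    rw [show (2:ℝ) = Real.sqrt 4 by
      rw [show (4:ℝ) = 2^2 by norm_num, Real.sqrt_sq (by norm_num : (0:ℝ) ≤ 2)]]
    exact Real.sqrt_le_sqrt (by norm_num)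
  have hsqrt3pos : 0 < Real.sqrt 3 := Real.sqrt_pos.2 (by norm_num)
  have hb2nn : 0 ≤ (v3 - v2) / (96 * Real.sqrt 3) :=
    div_nonneg (by linarith) (by positivity)
  refine le_min (le_min ?_ ?_) ?_
  · -- bound (v2 - v1)/216
    rw [sub_le_iff_le_add]
    apply Lmax4_le _ _ _ _ _ (by linarith)
    intro p1 p2 p3 p4 h1 h2 h3 h4 hs
    rcases le_total p2 p3 with hcase | hcase
    · -- compare with L23 at (p1, m, m, p4)
      have hq := L_le_Lmax4 v1 ((v2 + v3)/2) ((v2 + v3)/2) v4 p1 ((p2+p3)/2) ((p2+p3)/2) p4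
        (by linarith) (by linarith) (by linarith) (by linarith)
        h1 (by linarith) (by linarith) h4 (by linarith)
      have hdiff : v4 * p1 * p2 * p3 + v3 * p1 * p2 * p4 + v2 * p1 * p3 * p4
          + v1 * p2 * p3 * p4
          ≤ v4 * p1 * ((p2+p3)/2) * ((p2+p3)/2) + ((v2 + v3)/2) * p1 * ((p2+p3)/2) * p4
            + ((v2 + v3)/2) * p1 * ((p2+p3)/2) * p4 + v1 * ((p2+p3)/2) * ((p2+p3)/2) * p4 := by
        have t1 : 0 ≤ (v3 - v2) * (p1*p4) * (p3 - p2) :=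
          mul_nonneg (mul_nonneg (by linarith) (mul_nonneg h1 h4)) (by linarith)
        have hv4nn : (0:ℝ) ≤ v4 := by linarith
        have t2 : 0 ≤ (v4 * p1 + v1 * p4) * (p2-p3)^2 :=
          mul_nonneg (add_nonneg (mul_nonneg hv4nn h1) (mul_nonneg hv1.le h4)) (sq_nonneg _)
        linarith
      have : v4 * p1 * p2 * p3 + v3 * p1 * p2 * p4 + v2 * p1 * p3 * p4
          + v1 * p2 * p3 * p4 ≤ L23 := le_trans hdiff hq
      linarith
    · -- compare with L12 at ((p1+p2)/2, (p1+p2)/2, p3, p4)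
      have hq := L_le_Lmax4 ((v1 + v2)/2) ((v1 + v2)/2) v3 v4 ((p1+p2)/2) ((p1+p2)/2) p3 p4
        (by linarith) (by linarith) (by linarith) (by linarith)
        (by linarith) (by linarith) h3 h4 (by linarith)
      have hP1 := psi_le p1 p2 p3 p4 h1 h2 h3 h4 hs hcase
      have hps : (v2-v1)/2 * (p3*p4*(p1-p2) - (p3+p4)*(p1-p2)^2/2)
          ≤ (v2-v1)/2 * (1/108) :=
        mul_le_mul_of_nonneg_left hP1 (by linarith)
      have hV : 0 ≤ ((v3*p4 + v4*p3) - (v2-v1)*(p3+p4)) * (p1-p2)^2 := by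
        apply mul_nonneg _ (sq_nonneg _)
        nlinarith [mul_nonneg (by linarith : (0:ℝ) ≤ v3 - v2 + v1) h4,
          mul_nonneg (by linarith : (0:ℝ) ≤ v4 - v2 + v1) h3]
      have hstep : v4 * p1 * p2 * p3 + v3 * p1 * p2 * p4 + v2 * p1 * p3 * p4
          + v1 * p2 * p3 * p4
          ≤ (v4 * ((p1+p2)/2) * ((p1+p2)/2) * p3 + v3 * ((p1+p2)/2) * ((p1+p2)/2) * p4
            + ((v1 + v2)/2) * ((p1+p2)/2) * p3 * p4 + ((v1 + v2)/2) * ((p1+p2)/2) * p3 * p4)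
            + (v2 - v1)/216 := by linarith [hps, hV]
      linarith
  · -- bound (v3 - v2)/(96 √3)
    rw [sub_le_iff_le_add]
    apply Lmax4_le _ _ _ _ _ (by linarith)
    intro p1 p2 p3 p4 h1 h2 h3 h4 hs
    rcases le_total p3 p4 with hcase | hcase
    · -- compare with L34 at p itself
      have hq := L_le_Lmax4 v1 v2 ((v3 + v4)/2) ((v3 + v4)/2) p1 p2 p3 p4
        (by linarith) (by linarith) (by linarith) (by linarith) h1 h2 h3 h4 hs
      have hdiff : v4 * p1 * p2 * p3 + v3 * p1 * p2 * p4 + v2 * p1 * p3 * p4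
          + v1 * p2 * p3 * p4
          ≤ ((v3 + v4)/2) * p1 * p2 * p3 + ((v3 + v4)/2) * p1 * p2 * p4
            + v2 * p1 * p3 * p4 + v1 * p2 * p3 * p4 := by
        have t1 : 0 ≤ (v4 - v3) * (p1*p2) * (p4 - p3) :=
          mul_nonneg (mul_nonneg (by linarith) (mul_nonneg h1 h2)) (by linarith)
        linarith
      linarith [le_trans hdiff hq]
    · -- compare with L23 at (p1, m, m, p4)
      have hq := L_le_Lmax4 v1 ((v2 + v3)/2) ((v2 + v3)/2) v4 p1 ((p2+p3)/2) ((p2+p3)/2) p4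
        (by linarith) (by linarith) (by linarith) (by linarith)
        h1 (by linarith) (by linarith) h4 (by linarith)
      have hP2 := chi_le p1 p2 p3 p4 h1 h2 h3 h4 hs hcase
      have hps : (v3-v2)/2 * (p1*p4*(p2-p3) - p1*(p2-p3)^2/2)
          ≤ (v3-v2)/2 * (1/100) :=
        mul_le_mul_of_nonneg_left hP2 (by linarith)
      have hV : 0 ≤ ((v4*p1 + v1*p4) - (v3-v2)*p1) * (p2-p3)^2 := by
        apply mul_nonneg _ (sq_nonneg _)
        nlinarith [mul_nonneg (by linarith : (0:ℝ) ≤ v4 - v3 + v2) h1,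
          mul_nonneg hv1.le h4]
      have hstep : v4 * p1 * p2 * p3 + v3 * p1 * p2 * p4 + v2 * p1 * p3 * p4
          + v1 * p2 * p3 * p4
          ≤ (v4 * p1 * ((p2+p3)/2) * ((p2+p3)/2) + ((v2 + v3)/2) * p1 * ((p2+p3)/2) * p4
            + ((v2 + v3)/2) * p1 * ((p2+p3)/2) * p4 + v1 * ((p2+p3)/2) * ((p2+p3)/2) * p4)
            + (v3 - v2)/200 := by linarith [hps, hV]
      have h200 : (v3 - v2)/200 ≤ (v3 - v2)/(96 * Real.sqrt 3) := by
        apply div_le_div_of_nonneg_left (by linarith) (by positivity)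
        nlinarith [hsqrt3]
      linarith
  · -- bound (v4 - v3)/54
    rw [sub_le_iff_le_add]
    apply Lmax4_le _ _ _ _ _ (by linarith)
    intro p1 p2 p3 p4 h1 h2 h3 h4 hs
    have hq := L_le_Lmax4 v1 v2 ((v3 + v4)/2) ((v3 + v4)/2) p1 p2 p3 p4
      (by linarith) (by linarith) (by linarith) (by linarith) h1 h2 h3 h4 hs
    have hP3 : p1*p2*p3 ≤ 1/27 := by
      nlinarith [sq_nonneg (p1-p2), sq_nonneg (p1+p2-2*p3), sq_nonneg (p1+p2+p3),
        mul_nonneg h1 h2, mul_nonneg (mul_nonneg h1 h2) h3, h4]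
    have hdiff : v4 * p1 * p2 * p3 + v3 * p1 * p2 * p4 + v2 * p1 * p3 * p4
        + v1 * p2 * p3 * p4
        ≤ (((v3 + v4)/2) * p1 * p2 * p3 + ((v3 + v4)/2) * p1 * p2 * p4
          + v2 * p1 * p3 * p4 + v1 * p2 * p3 * p4) + (v4 - v3)/54 := by
      have tA : 0 ≤ (v4 - v3) * (p1*p2*p4) :=
        mul_nonneg (by linarith) (mul_nonneg (mul_nonneg h1 h2) h4)
      have tB : 0 ≤ (v4 - v3) * (1/27 - p1*p2*p3) :=
        mul_nonneg (by linarith) (by linarith [hP3])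
      linarith
    linarith
end

section
/- Let 0 < a ≤ b and suppose v = (v1,v2,v3,v4) satisfies a ≤ vi ≤ b for all i, v1 ≥ v2 ≥ v3 ≥ v4, and v1 ≥ v2 + v3 + v4. Then the relative loss of the uniform design satisfies R_u(v) = 1 − (3/4)·(1 + (v2+v3+v4)/v1)^{1/3} ≤ 1 − (3/4)·(1 + 3a/b)^{1/3}, and equality holds at v = (b, a, a, a) (which satisfies the constraints since necessarily b ≥ 3a). -/
/-- Relative loss of efficiency of the uniform design. -/
noncomputable def Ru (v1 v2 v3 v4 : ℝ) : ℝ :=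
  1 - (1/4) * ((v1 + v2 + v3 + v4) / Lmax4 v1 v2 v3 v4) ^ ((1 : ℝ)/3)


private lemma K0 (p2 p3 p4 : ℝ) (h2 : 0 ≤ p2) (h3 : 0 ≤ p3) (h4 : 0 ≤ p4)
    (hs : p2 + p3 + p4 ≤ 1) : p2*p3*p4 ≤ 1/27 := by
  nlinarith [sq_nonneg (p2-p3), sq_nonneg (p2-p4), sq_nonneg (p3-p4),
    sq_nonneg (p2+p3+p4-1), mul_nonneg h2 h3, mul_nonneg h2 h4, mul_nonneg h3 h4,
    mul_nonneg (mul_nonneg h2 h3) h4, sq_nonneg (p2+p3+p4)]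

private lemma K2 (p1 p2 p3 p4 : ℝ) (h1 : 0 ≤ p1) (h2 : 0 ≤ p2) (h3 : 0 ≤ p3) (h4 : 0 ≤ p4)
    (hs : p1 + p2 + p3 + p4 = 1) : p1*p2*p4 + p1*p3*p4 + 2*(p2*p3*p4) ≤ 2/27 := by
  nlinarith [sq_nonneg (p1-p2-p3), sq_nonneg (p2-p3), sq_nonneg (p1+p2+p3-2*p4),
    mul_nonneg h1 h4, mul_nonneg h2 h3, mul_nonneg (mul_nonneg h2 h3) h4,
    mul_nonneg h1 (mul_nonneg h2 h3), sq_nonneg (3*p4-1), mul_nonneg h4 (sq_nonneg (p1+p2+p3))]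

private lemma K3 (p1 p2 p3 p4 : ℝ) (h1 : 0 ≤ p1) (h2 : 0 ≤ p2) (h3 : 0 ≤ p3) (h4 : 0 ≤ p4)
    (hs : p1 + p2 + p3 + p4 = 1) : p1*p2*p3 + p1*p2*p4 + p1*p3*p4 + 3*(p2*p3*p4) ≤ 3/27 := by
  nlinarith [sq_nonneg (p2-p3), sq_nonneg (p2-p4), sq_nonneg (p3-p4),
    mul_nonneg h2 h3, mul_nonneg h2 h4, mul_nonneg h3 h4,
    mul_nonneg (mul_nonneg h2 h3) h4, mul_nonneg h1 (sq_nonneg (p2-p3)),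
    mul_nonneg h1 (sq_nonneg (p2-p4)), mul_nonneg h1 (sq_nonneg (p3-p4)),
    sq_nonneg (p2+p3+p4-1), mul_nonneg h1 h2, mul_nonneg h1 h3, mul_nonneg h1 h4,
    sq_nonneg (3*(p2+p3+p4)-2)]

private lemma keyIneq (v1 v2 v3 v4 p1 p2 p3 p4 : ℝ)
    (hv4 : 0 ≤ v4) (h34 : v4 ≤ v3) (h23 : v3 ≤ v2) (hs : v2 + v3 + v4 ≤ v1)
    (h1 : 0 ≤ p1) (h2 : 0 ≤ p2) (h3 : 0 ≤ p3) (h4 : 0 ≤ p4)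
    (hp : p1 + p2 + p3 + p4 = 1) :
    v4 * p1 * p2 * p3 + v3 * p1 * p2 * p4 + v2 * p1 * p3 * p4
      + v1 * p2 * p3 * p4 ≤ v1 / 27 := by
  have hA0 : p2*p3*p4 ≤ 1/27 := K0 p2 p3 p4 h2 h3 h4 (by linarith)
  have hA1 : (p1+p2)*p3*p4 ≤ 1/27 := by
    have := K0 (p1+p2) p3 p4 (by linarith) h3 h4 (by linarith); linarith
  have hA2 := K2 p1 p2 p3 p4 h1 h2 h3 h4 hp
  have hA3 := K3 p1 p2 p3 p4 h1 h2 h3 h4 hp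
  have c0 : 0 ≤ v1 - (v2+v3+v4) := by linarith
  have c1 : 0 ≤ v2 - v3 := by linarith
  have c2 : 0 ≤ v3 - v4 := by linarith
  have e : v4 * p1 * p2 * p3 + v3 * p1 * p2 * p4 + v2 * p1 * p3 * p4 + v1 * p2 * p3 * p4
      = (v1 - (v2+v3+v4)) * (p2*p3*p4) + (v2 - v3) * (p1*p3*p4 + p2*p3*p4)
        + (v3 - v4) * (p1*p2*p4 + p1*p3*p4 + 2*(p2*p3*p4))
        + v4 * (p1*p2*p3 + p1*p2*p4 + p1*p3*p4 + 3*(p2*p3*p4)) := by ring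
  have hA1' : p1*p3*p4 + p2*p3*p4 ≤ 1/27 := by nlinarith [hA1]
  rw [e]
  have b0 := mul_le_mul_of_nonneg_left hA0 c0
  have b1 := mul_le_mul_of_nonneg_left hA1' c1
  have b2 := mul_le_mul_of_nonneg_left hA2 c2
  have b3 := mul_le_mul_of_nonneg_left hA3 hv4
  nlinarith [b0, b1, b2, b3]

private lemma Lmax4_eq (v1 v2 v3 v4 : ℝ)
    (hv4 : 0 ≤ v4) (h34 : v4 ≤ v3) (h23 : v3 ≤ v2) (hs : v2 + v3 + v4 ≤ v1) :
    Lmax4 v1 v2 v3 v4 = v1 / 27 := by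
  have hmem : v1 / 27 ∈ {x : ℝ | ∃ p1 p2 p3 p4 : ℝ, 0 ≤ p1 ∧ 0 ≤ p2 ∧ 0 ≤ p3 ∧ 0 ≤ p4 ∧
      p1 + p2 + p3 + p4 = 1 ∧
      x = v4 * p1 * p2 * p3 + v3 * p1 * p2 * p4 + v2 * p1 * p3 * p4 + v1 * p2 * p3 * p4} := by
    refine ⟨0, 1/3, 1/3, 1/3, by norm_num, by norm_num, by norm_num, by norm_num,
      by norm_num, by ring⟩
  have hub : ∀ x ∈ {x : ℝ | ∃ p1 p2 p3 p4 : ℝ, 0 ≤ p1 ∧ 0 ≤ p2 ∧ 0 ≤ p3 ∧ 0 ≤ p4 ∧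
      p1 + p2 + p3 + p4 = 1 ∧
      x = v4 * p1 * p2 * p3 + v3 * p1 * p2 * p4 + v2 * p1 * p3 * p4 + v1 * p2 * p3 * p4},
      x ≤ v1 / 27 := by
    rintro x ⟨p1, p2, p3, p4, h1, h2, h3, h4, hp, rfl⟩
    exact keyIneq v1 v2 v3 v4 p1 p2 p3 p4 hv4 h34 h23 hs h1 h2 h3 h4 hp
  exact le_antisymm (csSup_le ⟨_, hmem⟩ hub) (le_csSup ⟨_, hub⟩ hmem)

private lemma h27 : (27:ℝ) ^ ((1:ℝ)/3) = 3 := by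
  rw [show (27:ℝ) = 3 ^ (3:ℝ) from by norm_num,
    ← Real.rpow_mul (by norm_num : (0:ℝ) ≤ 3)]
  norm_num

private lemma Ru_eq (v1 v2 v3 v4 : ℝ)
    (hv4 : 0 < v4) (h34 : v4 ≤ v3) (h23 : v3 ≤ v2) (hs : v2 + v3 + v4 ≤ v1) :
    Ru v1 v2 v3 v4 = 1 - (3/4) * (1 + (v2 + v3 + v4) / v1) ^ ((1 : ℝ)/3) := by
  have hv1 : 0 < v1 := by linarith
  rw [Ru, Lmax4_eq v1 v2 v3 v4 hv4.le h34 h23 hs]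
  have hd : (v1 + v2 + v3 + v4) / (v1 / 27) = 27 * (1 + (v2 + v3 + v4) / v1) := by
    field_simp; ring
  have hx : (0:ℝ) ≤ 1 + (v2 + v3 + v4) / v1 := by
    have : (0:ℝ) < (v2 + v3 + v4) / v1 := div_pos (by linarith) hv1
    linarith
  rw [hd, Real.mul_rpow (by norm_num) hx, h27]
  ring

/-- If `0 < a ≤ b`, `a ≤ vi ≤ b`, `v1 ≥ v2 ≥ v3 ≥ v4`, and
`v1 ≥ v2 + v3 + v4`, then `R_u(v) = 1 − (3/4)·(1+(v2+v3+v4)/v1)^{1/3}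
  ≤ 1 − (3/4)·(1+3a/b)^{1/3}`, with equality at `v = (b,a,a,a)` (which
satisfies the constraints since necessarily `b ≥ 3a`). -/
theorem stmt12 (a b v1 v2 v3 v4 : ℝ)
    (ha : 0 < a) (hab : a ≤ b)
    (hbd : a ≤ v1 ∧ v1 ≤ b ∧ a ≤ v2 ∧ v2 ≤ b ∧ a ≤ v3 ∧ v3 ≤ b ∧
      a ≤ v4 ∧ v4 ≤ b)
    (h12 : v2 ≤ v1) (h23 : v3 ≤ v2) (h34 : v4 ≤ v3)
    (hsat : v2 + v3 + v4 ≤ v1) :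
    Ru v1 v2 v3 v4 = 1 - (3/4) * (1 + (v2 + v3 + v4) / v1) ^ ((1 : ℝ)/3) ∧
    Ru v1 v2 v3 v4 ≤ 1 - (3/4) * (1 + 3 * a / b) ^ ((1 : ℝ)/3) ∧
    3 * a ≤ b ∧
    Ru b a a a = 1 - (3/4) * (1 + 3 * a / b) ^ ((1 : ℝ)/3) := by
  obtain ⟨ha1, hb1, ha2, hb2, ha3, hb3, ha4, hb4⟩ := hbd
  have hv4 : 0 < v4 := lt_of_lt_of_le ha ha4
  have hv1 : 0 < v1 := lt_of_lt_of_le ha ha1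
  have hb : 0 < b := lt_of_lt_of_le ha hab
  have heq := Ru_eq v1 v2 v3 v4 hv4 h34 h23 hsat
  have h3ab : 3 * a ≤ b := by linarith
  have heqb : Ru b a a a = 1 - (3/4) * (1 + 3 * a / b) ^ ((1 : ℝ)/3) := by
    have := Ru_eq b a a a ha le_rfl le_rfl (by linarith)
    rw [this, show a + a + a = 3 * a from by ring]
  refine ⟨heq, ?_, h3ab, heqb⟩
  rw [heq]
  have hmono : (1 + 3 * a / b) ^ ((1:ℝ)/3) ≤ (1 + (v2 + v3 + v4) / v1) ^ ((1:ℝ)/3) := by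
    apply Real.rpow_le_rpow (by positivity) _ (by norm_num)
    have : 3 * a / b ≤ (v2 + v3 + v4) / v1 := by
      rw [div_le_div_iff₀ hb hv1]
      nlinarith
    linarith
  nlinarith [hmono]
end

section
/- Suppose all vi > 0, v1 ≥ v2 ≥ v3 ≥ v4, and v1 < v2 + v3 + v4. Then the supremum of L(v,·) over the probability simplex is strictly less than (v1+v2+v3+v4)/54; equivalently, the relative loss of the uniform design satisfies R_u(v) < 1 − (3/4)·2^{1/3}. -/
set_option maxHeartbeats 1000000

lemma cube_le (a b c : ℝ) (ha : 0 ≤ a) (hb : 0 ≤ b) (hc : 0 ≤ c) (h : a + b + c ≤ 1) :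
    a * b * c ≤ 1/27 := by
  nlinarith [sq_nonneg (a-b), sq_nonneg (b-c), sq_nonneg (a-c), sq_nonneg (a+b-2*c),
    mul_nonneg ha hb, mul_nonneg hb hc, mul_nonneg ha hc, sq_nonneg (a+b+c-1)]

lemma e3_le (p1 p2 p3 p4 : ℝ) (h1 : 0 ≤ p1) (h2 : 0 ≤ p2) (h3 : 0 ≤ p3) (h4 : 0 ≤ p4)
    (hs : p1 + p2 + p3 + p4 = 1) :
    p1*p2*p3 + p1*p2*p4 + p1*p3*p4 + p2*p3*p4 ≤ 1/16 := by
  have ha : 0 ≤ p1 + p2 := by linarith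
  have hb : 0 ≤ p3 + p4 := by linarith
  have k1 : p1*p2*(p3+p4) ≤ ((p1+p2)^2/4) * (p3+p4) := by
    nlinarith [mul_nonneg (sq_nonneg (p1-p2)) hb]
  have k2 : p3*p4*(p1+p2) ≤ ((p3+p4)^2/4) * (p1+p2) := by
    nlinarith [mul_nonneg (sq_nonneg (p3-p4)) ha]
  have hab : p3 + p4 = 1 - (p1+p2) := by linarith
  have k3 : ((p1+p2)^2/4) * (p3+p4) + ((p3+p4)^2/4) * (p1+p2) ≤ 1/16 := by
    rw [hab]; nlinarith [sq_nonneg (p1+p2-1/2)]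
  nlinarith [k1, k2, k3]

lemma case_pos (a b c d n1 n2 n3 n4 vmax vmin : ℝ)
    (hva : vmin ≤ a) (hvb : vmin ≤ b) (hvc : vmin ≤ c) (hvd : vmin ≤ d)
    (ham : a ≤ vmax) (hmin : 0 < vmin)
    (hB : 0 < a + b + c + d - 2*vmax)
    (h1 : 1/54 < n1) (h12 : n1 + n2 ≤ 1/27) (h13 : n1 + n3 ≤ 1/27) (h14 : n1 + n4 ≤ 1/27)
    (he : n1 + n2 + n3 + n4 ≤ 1/16) :
    ((vmax - vmin) + (a + b + c + d - 2*vmax)) *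
      (54*(a*n1 + b*n2 + c*n3 + d*n4) - (a + b + c + d))
      ≤ -((a + b + c + d - 2*vmax) * (5*vmin/8)) := by
  have hs : 0 < 54*n1 - 1 := by linarith
  have hbp : 0 < b := lt_of_lt_of_le hmin hvb
  have hcp : 0 < c := lt_of_lt_of_le hmin hvc
  have hdp : 0 < d := lt_of_lt_of_le hmin hvd
  have hb' : b*(54*n2-1) ≤ b*(-(54*n1-1)) :=
    mul_le_mul_of_nonneg_left (by linarith) hbp.le
  have hc' : c*(54*n3-1) ≤ c*(-(54*n1-1)) :=
    mul_le_mul_of_nonneg_left (by linarith) hcp.le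
  have hd' : d*(54*n4-1) ≤ d*(-(54*n1-1)) :=
    mul_le_mul_of_nonneg_left (by linarith) hdp.le
  have ha' : a*(54*n1-1) ≤ vmax*(54*n1-1) :=
    mul_le_mul_of_nonneg_right ham hs.le
  have hbs : (a+b+c+d-vmax)*(54*n1-1) ≤ (b+c+d)*(54*n1-1) :=
    mul_le_mul_of_nonneg_right (by linarith) hs.le
  have hi : 54*(a*n1 + b*n2 + c*n3 + d*n4) - (a + b + c + d)
      ≤ -((a + b + c + d - 2*vmax) * (54*n1-1)) := by linarith [hb', hc', hd', ha', hbs]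
  have hb'' : b*(54*n2-1) ≤ vmin*(54*n2-1) :=
    mul_le_mul_of_nonpos_right hvb (by linarith)
  have hc'' : c*(54*n3-1) ≤ vmin*(54*n3-1) :=
    mul_le_mul_of_nonpos_right hvc (by linarith)
  have hd'' : d*(54*n4-1) ≤ vmin*(54*n4-1) :=
    mul_le_mul_of_nonpos_right hvd (by linarith)
  have hsum : vmin*((54*n2-1)+(54*n3-1)+(54*n4-1)) ≤ vmin*(-(5:ℝ)/8 - (54*n1-1)) :=
    mul_le_mul_of_nonneg_left (by linarith) hmin.le
  have hii : 54*(a*n1 + b*n2 + c*n3 + d*n4) - (a + b + c + d)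
      ≤ (vmax - vmin)*(54*n1-1) - 5*vmin/8 := by linarith [hb'', hc'', hd'', ha', hsum]
  have k1 := mul_le_mul_of_nonneg_left hi (by linarith : (0:ℝ) ≤ vmax - vmin)
  have k2 := mul_le_mul_of_nonneg_left hii hB.le
  linarith [k1, k2]

lemma case_small (a b c d n1 n2 n3 n4 vmax vmin : ℝ)
    (hva : vmin ≤ a) (hvb : vmin ≤ b) (hvc : vmin ≤ c) (hvd : vmin ≤ d)
    (hmin : 0 < vmin)
    (hB : 0 < a + b + c + d - 2*vmax) (hA : vmin ≤ vmax)
    (h1 : n1 ≤ 1/54) (h2 : n2 ≤ 1/54) (h3 : n3 ≤ 1/54) (h4 : n4 ≤ 1/54)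
    (he : n1 + n2 + n3 + n4 ≤ 1/16) :
    ((vmax - vmin) + (a + b + c + d - 2*vmax)) *
      (54*(a*n1 + b*n2 + c*n3 + d*n4) - (a + b + c + d))
      ≤ -((a + b + c + d - 2*vmax) * (5*vmin/8)) := by
  have ha' : a*(54*n1-1) ≤ vmin*(54*n1-1) := mul_le_mul_of_nonpos_right hva (by linarith)
  have hb' : b*(54*n2-1) ≤ vmin*(54*n2-1) := mul_le_mul_of_nonpos_right hvb (by linarith)
  have hc' : c*(54*n3-1) ≤ vmin*(54*n3-1) := mul_le_mul_of_nonpos_right hvc (by linarith)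
  have hd' : d*(54*n4-1) ≤ vmin*(54*n4-1) := mul_le_mul_of_nonpos_right hvd (by linarith)
  have hsum : vmin*((54*n1-1)+(54*n2-1)+(54*n3-1)+(54*n4-1)) ≤ vmin*(-(5:ℝ)/8) :=
    mul_le_mul_of_nonneg_left (by linarith) hmin.le
  have hii : 54*(a*n1 + b*n2 + c*n3 + d*n4) - (a + b + c + d) ≤ -(5*vmin/8) := by
    linarith [ha', hb', hc', hd', hsum]
  have hneg : 54*(a*n1 + b*n2 + c*n3 + d*n4) - (a + b + c + d) ≤ 0 := by
    linarith [hii, hmin]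
  have key : 0 ≤ (vmax - vmin) * (-(54*(a*n1 + b*n2 + c*n3 + d*n4) - (a + b + c + d))) :=
    mul_nonneg (by linarith) (by linarith)
  linarith [mul_le_mul_of_nonneg_left hii hB.le, key]



/-- If all `vi > 0`, `v1 ≥ v2 ≥ v3 ≥ v4`, and `v1 < v2 + v3 + v4`, then
`Lmax[v] < (v1+v2+v3+v4)/54`; equivalently `R_u(v) < 1 − (3/4)·2^{1/3}`. -/
theorem stmt13 (v1 v2 v3 v4 : ℝ)
    (hv1 : 0 < v1) (hv2 : 0 < v2) (hv3 : 0 < v3) (hv4 : 0 < v4)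
    (h12 : v2 ≤ v1) (h23 : v3 ≤ v2) (h34 : v4 ≤ v3)
    (hlt : v1 < v2 + v3 + v4) :
    Lmax4 v1 v2 v3 v4 < (v1 + v2 + v3 + v4) / 54 ∧
    Ru v1 v2 v3 v4 < 1 - (3/4) * (2 : ℝ) ^ ((1 : ℝ)/3) := by
  set S : ℝ := v1 + v2 + v3 + v4 with hS
  have hv23 : (0:ℝ) < v2 + v3 := by linarith
  set δ : ℝ := (v2 + v3 + v4 - v1) * (5*v4/8) / (v2 + v3) with hδ
  have hδpos : 0 < δ := div_pos (mul_pos (by linarith) (by linarith)) hv23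
  have hδsmall : δ ≤ 5*v4/8 := by
    rw [hδ, div_le_iff₀ hv23]
    nlinarith [mul_nonneg (by linarith : (0:ℝ) ≤ v1 - v4) (by linarith : (0:ℝ) ≤ 5*v4/8)]
  have hbound : ∀ x ∈ {x : ℝ | ∃ p1 p2 p3 p4 : ℝ, 0 ≤ p1 ∧ 0 ≤ p2 ∧ 0 ≤ p3 ∧ 0 ≤ p4 ∧
      p1 + p2 + p3 + p4 = 1 ∧
      x = v4 * p1 * p2 * p3 + v3 * p1 * p2 * p4 + v2 * p1 * p3 * p4
          + v1 * p2 * p3 * p4}, x ≤ (S - δ)/54 := by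
    rintro x ⟨p1, p2, p3, p4, hp1, hp2, hp3, hp4, hps, rfl⟩
    have c12 := cube_le (p1+p2) p3 p4 (by linarith) hp3 hp4 (by linarith)
    have c13 := cube_le (p1+p3) p2 p4 (by linarith) hp2 hp4 (by linarith)
    have c14 := cube_le (p1+p4) p2 p3 (by linarith) hp2 hp3 (by linarith)
    have c23 := cube_le (p2+p3) p1 p4 (by linarith) hp1 hp4 (by linarith)
    have c24 := cube_le (p2+p4) p1 p3 (by linarith) hp1 hp3 (by linarith)
    have c34 := cube_le (p3+p4) p1 p2 (by linarith) hp1 hp2 (by linarith)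
    have he3 := e3_le p1 p2 p3 p4 hp1 hp2 hp3 hp4 hps
    have hB : (0:ℝ) < v1 + v2 + v3 + v4 - 2*v1 := by linarith
    have hmaster : (v2 + v3) *
        (54*(v4 * p1 * p2 * p3 + v3 * p1 * p2 * p4 + v2 * p1 * p3 * p4
          + v1 * p2 * p3 * p4) - S) ≤ -((v2 + v3 + v4 - v1) * (5*v4/8)) := by
      rcases lt_or_ge (1/54 : ℝ) (p2*p3*p4) with hc | hs1
      · have := case_pos v1 v2 v3 v4 (p2*p3*p4) (p1*p3*p4) (p1*p2*p4) (p1*p2*p3) v1 v4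
          (by linarith) (by linarith) (by linarith) le_rfl le_rfl hv4 (by linarith)
          hc (by linarith [c12]) (by linarith [c13]) (by linarith [c14]) (by linarith [he3])
        linarith [this]
      rcases lt_or_ge (1/54 : ℝ) (p1*p3*p4) with hc | hs2
      · have := case_pos v2 v1 v3 v4 (p1*p3*p4) (p2*p3*p4) (p1*p2*p4) (p1*p2*p3) v1 v4
          (by linarith) (by linarith) (by linarith) le_rfl h12 hv4 (by linarith)
          hc (by linarith [c12]) (by linarith [c23]) (by linarith [c24]) (by linarith [he3])
        linarith [this]
      rcases lt_or_ge (1/54 : ℝ) (p1*p2*p4) with hc | hs3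
      · have := case_pos v3 v1 v2 v4 (p1*p2*p4) (p2*p3*p4) (p1*p3*p4) (p1*p2*p3) v1 v4
          (by linarith) (by linarith) (by linarith) le_rfl (by linarith) hv4 (by linarith)
          hc (by linarith [c13]) (by linarith [c23]) (by linarith [c34]) (by linarith [he3])
        linarith [this]
      rcases lt_or_ge (1/54 : ℝ) (p1*p2*p3) with hc | hs4
      · have := case_pos v4 v1 v2 v3 (p1*p2*p3) (p2*p3*p4) (p1*p3*p4) (p1*p2*p4) v1 v4
          le_rfl (by linarith) (by linarith) (by linarith) (by linarith) hv4 (by linarith)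
          hc (by linarith [c14]) (by linarith [c24]) (by linarith [c34]) (by linarith [he3])
        linarith [this]
      · have := case_small v1 v2 v3 v4 (p2*p3*p4) (p1*p3*p4) (p1*p2*p4) (p1*p2*p3) v1 v4
          (by linarith) (by linarith) (by linarith) le_rfl hv4 (by linarith) (by linarith)
          hs1 hs2 hs3 hs4 (by linarith [he3])
        linarith [this]
    have h2 : 54*(v4 * p1 * p2 * p3 + v3 * p1 * p2 * p4 + v2 * p1 * p3 * p4
        + v1 * p2 * p3 * p4) - S ≤ -((v2 + v3 + v4 - v1) * (5*v4/8))/(v2 + v3) :=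
      (le_div_iff₀ hv23).mpr (by linarith [hmaster])
    rw [neg_div] at h2
    rw [hδ]
    linarith [h2]
  have hbdd : BddAbove {x : ℝ | ∃ p1 p2 p3 p4 : ℝ, 0 ≤ p1 ∧ 0 ≤ p2 ∧ 0 ≤ p3 ∧ 0 ≤ p4 ∧
      p1 + p2 + p3 + p4 = 1 ∧
      x = v4 * p1 * p2 * p3 + v3 * p1 * p2 * p4 + v2 * p1 * p3 * p4
          + v1 * p2 * p3 * p4} := ⟨(S - δ)/54, fun x hx => hbound x hx⟩
  have hc0 : (0:ℝ) ≤ (S - δ)/54 := by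
    have : δ ≤ S := by linarith [hδsmall]
    linarith
  have hsup_le : Lmax4 v1 v2 v3 v4 ≤ (S - δ)/54 := Real.sSup_le hbound hc0
  have hpart1 : Lmax4 v1 v2 v3 v4 < S / 54 := lt_of_le_of_lt hsup_le (by
    have : (S - δ)/54 < S/54 := by linarith
    exact this)
  refine ⟨hpart1, ?_⟩
  have hmem : S/64 ∈ {x : ℝ | ∃ p1 p2 p3 p4 : ℝ, 0 ≤ p1 ∧ 0 ≤ p2 ∧ 0 ≤ p3 ∧ 0 ≤ p4 ∧
      p1 + p2 + p3 + p4 = 1 ∧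
      x = v4 * p1 * p2 * p3 + v3 * p1 * p2 * p4 + v2 * p1 * p3 * p4
          + v1 * p2 * p3 * p4} := by
    refine ⟨1/4, 1/4, 1/4, 1/4, by norm_num, by norm_num, by norm_num, by norm_num,
      by norm_num, by rw [hS]; ring⟩
  have hpos : 0 < Lmax4 v1 v2 v3 v4 :=
    lt_of_lt_of_le (by positivity) (le_csSup hbdd hmem)
  have h54 : (54:ℝ) < S / Lmax4 v1 v2 v3 v4 := by
    rw [lt_div_iff₀ hpos]; linarith [hpart1]
  have hr : (54:ℝ)^((1:ℝ)/3) < (S / Lmax4 v1 v2 v3 v4)^((1:ℝ)/3) :=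
    Real.rpow_lt_rpow (by norm_num) h54 (by norm_num)
  have h54c : (54:ℝ)^((1:ℝ)/3) = 3 * (2:ℝ)^((1:ℝ)/3) := by
    rw [show (54:ℝ) = 27 * 2 by norm_num, Real.mul_rpow (by norm_num) (by norm_num)]
    congr 1
    rw [show (27:ℝ) = (3:ℝ)^(3:ℕ) by norm_num, ← Real.rpow_natCast (3:ℝ) 3,
      ← Real.rpow_mul (by norm_num)]
    norm_num
  rw [Ru]
  rw [h54c] at hr
  linarith [hr]
end

section
/- Suppose all vi > 0, v1 ≥ v2 ≥ v3 ≥ v4, and v1 = v2 + v3 + v4. Then the supremum of L(v,·) over the probability simplex equals (v1+v2+v3+v4)/54; equivalently, the relative loss of the uniform design satisfies R_u(v) = 1 − (3/4)·2^{1/3}. -/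
lemma mul_mul_le_one_div_27 {a b c : ℝ} (ha : 0 ≤ a) (hb : 0 ≤ b) (hc : 0 ≤ c)
    (h : a + b + c = 1) : a * b * c ≤ 1 / 27 := by
  nlinarith [sq_nonneg (a - b), sq_nonneg (b - c), sq_nonneg (a - c),
    sq_nonneg (a + b - 2 * c), sq_nonneg (a + c - 2 * b), sq_nonneg (b + c - 2 * a),
    mul_nonneg ha hb, mul_nonneg hb hc, mul_nonneg ha hc]

lemma isGreatest_simplex_values_of_eq_add {v1 v2 v3 v4 : ℝ}
    (hv2 : 0 ≤ v2) (hv3 : 0 ≤ v3) (hv4 : 0 ≤ v4) (heq : v1 = v2 + v3 + v4) :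
    IsGreatest {x : ℝ | ∃ p1 p2 p3 p4 : ℝ, 0 ≤ p1 ∧ 0 ≤ p2 ∧ 0 ≤ p3 ∧ 0 ≤ p4 ∧
      p1 + p2 + p3 + p4 = 1 ∧
      x = v4 * p1 * p2 * p3 + v3 * p1 * p2 * p4 + v2 * p1 * p3 * p4
          + v1 * p2 * p3 * p4} ((v2 + v3 + v4) / 27) := by
  subst heq
  refine ⟨⟨0, 1/3, 1/3, 1/3, le_rfl, by norm_num, by norm_num, by norm_num, by norm_num,
    by ring⟩, ?_⟩
  rintro x ⟨p1, p2, p3, p4, h1, h2, h3, h4, hsum, rfl⟩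
  have t2 : p3 * p4 * (p1 + p2) ≤ 1 / 27 :=
    mul_mul_le_one_div_27 h3 h4 (by linarith) (by linarith)
  have t3 : p2 * p4 * (p1 + p3) ≤ 1 / 27 :=
    mul_mul_le_one_div_27 h2 h4 (by linarith) (by linarith)
  have t4 : p2 * p3 * (p1 + p4) ≤ 1 / 27 :=
    mul_mul_le_one_div_27 h2 h3 (by linarith) (by linarith)
  calc _ = v2 * (p3 * p4 * (p1 + p2)) + v3 * (p2 * p4 * (p1 + p3))
        + v4 * (p2 * p3 * (p1 + p4)) := by ring
    _ ≤ v2 * (1 / 27) + v3 * (1 / 27) + v4 * (1 / 27) := by gcongr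
    _ = (v2 + v3 + v4) / 27 := by ring

lemma Lmax4_eq_of_eq_add {v1 v2 v3 v4 : ℝ}
    (hv2 : 0 ≤ v2) (hv3 : 0 ≤ v3) (hv4 : 0 ≤ v4) (heq : v1 = v2 + v3 + v4) :
    Lmax4 v1 v2 v3 v4 = (v2 + v3 + v4) / 27 :=
  (isGreatest_simplex_values_of_eq_add hv2 hv3 hv4 heq).csSup_eq

lemma rpow_54_one_div_three : (54 : ℝ) ^ ((1 : ℝ) / 3) = 3 * 2 ^ ((1 : ℝ) / 3) := by
  have h27 : (27 : ℝ) ^ ((1 : ℝ) / 3) = 3 := by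
    rw [show (27 : ℝ) = 3 ^ (3 : ℝ) by norm_num, ← Real.rpow_mul (by norm_num)]
    norm_num
  rw [show (54 : ℝ) = 27 * 2 by norm_num, Real.mul_rpow (by norm_num) (by norm_num), h27]

theorem stmt14_general (v1 v2 v3 v4 : ℝ)
    (hv2 : 0 < v2) (hv3 : 0 < v3) (hv4 : 0 < v4)
    (heq : v1 = v2 + v3 + v4) :
    Lmax4 v1 v2 v3 v4 = (v1 + v2 + v3 + v4) / 54 ∧
    Ru v1 v2 v3 v4 = 1 - (3/4) * (2 : ℝ) ^ ((1 : ℝ)/3) := by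
  have hL : Lmax4 v1 v2 v3 v4 = (v1 + v2 + v3 + v4) / 54 := by
    rw [Lmax4_eq_of_eq_add hv2.le hv3.le hv4.le heq, heq]
    ring
  refine ⟨hL, ?_⟩
  have hS : v1 + v2 + v3 + v4 ≠ 0 := by linarith
  rw [Ru, hL, div_div_cancel₀ hS, rpow_54_one_div_three]
  ring

/-- If all `vi > 0`, `v1 ≥ v2 ≥ v3 ≥ v4`, and `v1 = v2 + v3 + v4`, then
`Lmax[v] = (v1+v2+v3+v4)/54`; equivalently `R_u(v) = 1 − (3/4)·2^{1/3}`. -/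
theorem stmt14 (v1 v2 v3 v4 : ℝ)
    (hv1 : 0 < v1) (hv2 : 0 < v2) (hv3 : 0 < v3) (hv4 : 0 < v4)
    (h12 : v2 ≤ v1) (h23 : v3 ≤ v2) (h34 : v4 ≤ v3)
    (heq : v1 = v2 + v3 + v4) :
    Lmax4 v1 v2 v3 v4 = (v1 + v2 + v3 + v4) / 54 ∧
    Ru v1 v2 v3 v4 = 1 - (3/4) * (2 : ℝ) ^ ((1 : ℝ)/3) :=
  stmt14_general v1 v2 v3 v4 hv2 hv3 hv4 heq
end

section
/- Let n ≥ 1 and 1 ≤ q ≤ n. Let F be an n×n real matrix with every entry equal to +1 or −1 such that Fᵀ·F = n·I_n (a Hadamard matrix), and let X be the n×q submatrix consisting of the first q columns of F. Let w1,…,wn > 0, let p1,…,pn ≥ 0 with p1+⋯+pn = 1, let W = diag(w1·p1, …, wn·pn), and let w_M = max{w1,…,wn}. Then det(Xᵀ·W·X) ≥ n^n·(∏ᵢ wᵢ)·(∏ᵢ pᵢ)/w_M^{n−q}. -/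
/-!
Put `M = Fᵀ·diag(wᵢpᵢ)·F`. Its leading `q × q` block is `Xᵀ·W·X`, its determinant is
`(det F)²·∏ wᵢpᵢ = nⁿ·∏ wᵢ·∏ pᵢ`, and since `F` has `±1` entries each diagonal entry of `M`
is `∑ wᵢpᵢ ≤ w_M`. For a positive definite matrix, bordering a leading block by one row and
column multiplies the determinant by at most the new diagonal entry: the Schur complement of
the block is that entry minus a nonnegative quadratic form. Hence
`det M ≤ w_M^{n-q}·det(Xᵀ·W·X)`. If some `pᵢ` vanishes, the bound holds because `Xᵀ·W·X` is
positive semidefinite.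
-/

open Matrix

namespace Matrix

theorem PosDef.det_le_det_toBlocks₁₁_mul {m o : Type*} [Fintype m] [Fintype o]
    [DecidableEq m] [DecidableEq o] [Unique o] {M : Matrix (m ⊕ o) (m ⊕ o) ℝ} (hM : M.PosDef) :
    M.det ≤ M.toBlocks₁₁.det * M.toBlocks₂₂ default default := by
  have hA : M.toBlocks₁₁.PosDef := hM.submatrix Sum.inl_injective
  have hC : M.toBlocks₂₁ = M.toBlocks₁₂ᴴ := by
    conv_lhs => rw [← hM.1]
    rfl
  let := hA.isUnit.invertible
  have hS : (M.toBlocks₁₂ᴴ * M.toBlocks₁₁⁻¹ * M.toBlocks₁₂).PosSemidef :=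
    hA.inv.posSemidef.conjTranspose_mul_mul_same _
  rw [← fromBlocks_toBlocks M, det_fromBlocks₁₁, hC, det_unique (n := o),
    invOf_eq_nonsing_inv]
  simp only [toBlocks_fromBlocks₁₁, toBlocks_fromBlocks₂₂, sub_apply]
  exact mul_le_mul_of_nonneg_left (sub_le_self _ hS.diag_nonneg) hA.det_pos.le

theorem PosDef.det_le_det_submatrix_castSucc_mul {k : ℕ}
    {M : Matrix (Fin (k + 1)) (Fin (k + 1)) ℝ} (hM : M.PosDef) :
    M.det ≤ (M.submatrix Fin.castSucc Fin.castSucc).det * M (Fin.last k) (Fin.last k) := by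
  -- Along `Fin k ⊕ Fin 1 ≃ Fin (k + 1)` the blocks of `M` are definitionally
  -- `M.submatrix Fin.castSucc Fin.castSucc` and the entry `M (Fin.last k) (Fin.last k)`.
  have h := (hM.submatrix (finSumFinEquiv (m := k) (n := 1)).injective).det_le_det_toBlocks₁₁_mul
  rwa [det_submatrix_equiv_self] at h

theorem PosDef.det_le_det_submatrix_castLE_mul_pow {n q : ℕ} {M : Matrix (Fin n) (Fin n) ℝ}
    (hM : M.PosDef) (hq : q ≤ n) {s : ℝ} (hs : ∀ i, M i i ≤ s) :
    M.det ≤ (M.submatrix (Fin.castLE hq) (Fin.castLE hq)).det * s ^ (n - q) := by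
  suffices h : ∀ k, q ≤ k → ∀ hk : k ≤ n,
      (M.submatrix (Fin.castLE hk) (Fin.castLE hk)).det ≤
        (M.submatrix (Fin.castLE hq) (Fin.castLE hq)).det * s ^ (k - q) by
    simpa using h n hq le_rfl
  intro k hqk
  induction k, hqk using Nat.le_induction with
  | base => simp
  | succ k hqk ih =>
    intro hk
    have hk' : k ≤ n := k.le_succ.trans hk
    have hlead := (hM.submatrix (Fin.castLE_injective hk)).det_le_det_submatrix_castSucc_mul
    have hs' : 0 ≤ s := hM.diag_pos.le.trans (hs ⟨k, hk⟩)
    calc _ ≤ (M.submatrix (Fin.castLE hk') (Fin.castLE hk')).det * s :=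
          hlead.trans (mul_le_mul_of_nonneg_left (hs _)
            (hM.submatrix (Fin.castLE_injective hk')).det_pos.le)
      _ ≤ (M.submatrix (Fin.castLE hq) (Fin.castLE hq)).det * s ^ (k - q) * s :=
          mul_le_mul_of_nonneg_right (ih hk') hs'
      _ = _ := by rw [mul_assoc, ← pow_succ, Nat.sub_add_comm hqk]

variable {ι : Type*} [Fintype ι] [DecidableEq ι]

theorem posSemidef_transpose_mul_diagonal_mul {κ : Type*} [Fintype κ] (X : Matrix ι κ ℝ)
    {v : ι → ℝ} (hv : ∀ i, 0 ≤ v i) : (Xᵀ * diagonal v * X).PosSemidef := by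
  simpa only [conjTranspose_eq_transpose_of_trivial] using
    (PosSemidef.diagonal hv).conjTranspose_mul_mul_same X

theorem posDef_transpose_mul_diagonal_mul {κ : Type*} [Fintype κ] {X : Matrix ι κ ℝ}
    (hX : Function.Injective X.mulVec) {v : ι → ℝ} (hv : ∀ i, 0 < v i) :
    (Xᵀ * diagonal v * X).PosDef := by
  simpa only [conjTranspose_eq_transpose_of_trivial] using
    (PosDef.diagonal hv).conjTranspose_mul_mul_same hX

theorem transpose_mul_diagonal_mul_apply_self {κ : Type*} {X : Matrix ι κ ℝ}
    (hX : ∀ i j, X i j = 1 ∨ X i j = -1) (v : ι → ℝ) (j : κ) :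
    (Xᵀ * diagonal v * X) j j = ∑ i, v i := by
  simp only [mul_apply, transpose_apply, diagonal_apply, mul_ite, mul_zero, Finset.sum_ite_eq',
    Finset.mem_univ, if_true]
  refine Finset.sum_congr rfl fun i _ => ?_
  rcases hX i j with h | h <;> rw [h] <;> ring

theorem det_transpose_mul_diagonal_mul_of_transpose_mul_self {X : Matrix ι ι ℝ} {c : ℝ}
    (hX : Xᵀ * X = c • 1) (v : ι → ℝ) :
    (Xᵀ * diagonal v * X).det = c ^ Fintype.card ι * ∏ i, v i := by
  have h := congrArg det hX
  rw [det_mul, det_transpose, det_smul, det_one, mul_one] at h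
  rw [det_mul, det_mul, det_transpose, det_diagonal, ← h]
  ring

theorem injective_mulVec_of_transpose_mul_self {X : Matrix ι ι ℝ} {c : ℝ} (hc : c ≠ 0)
    (hX : Xᵀ * X = c • 1) : Function.Injective X.mulVec :=
  Function.LeftInverse.injective (g := (c⁻¹ • Xᵀ).mulVec) fun x => by
    rw [mulVec_mulVec, smul_mul, hX, smul_smul, inv_mul_cancel₀ hc, one_smul, one_mulVec]

end Matrix

theorem stmt16_general (n q : ℕ) (hq : q ≤ n)
    (F : Matrix (Fin n) (Fin n) ℝ)
    (hF : ∀ i j, F i j = 1 ∨ F i j = -1)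
    (hHad : Fᵀ * F = (n : ℝ) • (1 : Matrix (Fin n) (Fin n) ℝ))
    (w p : Fin n → ℝ) (hw : ∀ i, 0 < w i) (hp : ∀ i, 0 ≤ p i)
    (hsum : ∑ i, p i = 1)
    (wM : ℝ) (hwM : IsGreatest (Set.range w) wM) :
    (n : ℝ) ^ n * (∏ i, w i) * (∏ i, p i) / wM ^ (n - q)
      ≤ ((F.submatrix id (Fin.castLE hq))ᵀ
          * Matrix.diagonal (fun i => w i * p i)
          * F.submatrix id (Fin.castLE hq)).det := by
  set M := Fᵀ * diagonal (fun i => w i * p i) * F with hM_def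
  have hlead : M.submatrix (Fin.castLE hq) (Fin.castLE hq) =
      (F.submatrix id (Fin.castLE hq))ᵀ * diagonal (fun i => w i * p i) *
        F.submatrix id (Fin.castLE hq) := rfl
  obtain ⟨i₀, hi₀⟩ := hwM.1
  have hwM_pos : 0 < wM := hi₀ ▸ hw i₀
  rw [div_le_iff₀ (pow_pos hwM_pos _), ← hlead]
  by_cases hp_pos : ∀ i, 0 < p i
  · have hM : M.PosDef := posDef_transpose_mul_diagonal_mul
      (injective_mulVec_of_transpose_mul_self (by simpa using i₀.pos.ne') hHad)
      fun i => mul_pos (hw i) (hp_pos i)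
    have hdiag : ∀ j, M j j ≤ wM := fun j => by
      rw [hM_def, transpose_mul_diagonal_mul_apply_self hF]
      calc ∑ i, w i * p i ≤ ∑ i, wM * p i :=
            Finset.sum_le_sum fun i _ => mul_le_mul_of_nonneg_right (hwM.2 ⟨i, rfl⟩) (hp i)
        _ = wM := by rw [← Finset.mul_sum, hsum, mul_one]
    calc (n : ℝ) ^ n * (∏ i, w i) * (∏ i, p i) = M.det := by
          rw [det_transpose_mul_diagonal_mul_of_transpose_mul_self hHad, Fintype.card_fin,
            Finset.prod_mul_distrib, mul_assoc]
      _ ≤ _ := hM.det_le_det_submatrix_castLE_mul_pow hq hdiag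
  · obtain ⟨i, hi⟩ := not_forall.mp hp_pos
    rw [Finset.prod_eq_zero (Finset.mem_univ i) (le_antisymm (not_lt.mp hi) (hp i)), mul_zero]
    exact mul_nonneg (posSemidef_transpose_mul_diagonal_mul _
      fun i => mul_nonneg (hw i).le (hp i)).det_nonneg (pow_nonneg hwM_pos.le _)

/-- Let `F` be an `n×n` Hadamard matrix (±1 entries, `Fᵀ·F = n·I`), and `X` the
`n×q` submatrix of its first `q` columns.  For weights `wi > 0`, proportions
`pi ≥ 0` summing to `1`, `W = diag(wi·pi)` and `w_M = max wi`, we have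
`det(Xᵀ·W·X) ≥ nⁿ·(∏ wi)·(∏ pi)/w_M^{n−q}`. -/
theorem stmt16 (n q : ℕ) (hn : 1 ≤ n) (hq1 : 1 ≤ q) (hq : q ≤ n)
    (F : Matrix (Fin n) (Fin n) ℝ)
    (hF : ∀ i j, F i j = 1 ∨ F i j = -1)
    (hHad : Fᵀ * F = (n : ℝ) • (1 : Matrix (Fin n) (Fin n) ℝ))
    (w p : Fin n → ℝ) (hw : ∀ i, 0 < w i) (hp : ∀ i, 0 ≤ p i)
    (hsum : ∑ i, p i = 1)
    (wM : ℝ) (hwM : IsGreatest (Set.range w) wM) :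
    (n : ℝ) ^ n * (∏ i, w i) * (∏ i, p i) / wM ^ (n - q)
      ≤ ((F.submatrix id (Fin.castLE hq))ᵀ
          * Matrix.diagonal (fun i => w i * p i)
          * F.submatrix id (Fin.castLE hq)).det :=
  stmt16_general n q hq F hF hHad w p hw hp hsum wM hwM
end

section
/- Let n ≥ 1 and 1 ≤ m ≤ n. Let R be an n×m real matrix with every entry equal to +1 or −1 such that Rᵀ·R = n·I_m. Let p1,…,pn ≥ 0 with p1+⋯+pn = 1 and P = diag(p1,…,pn). Then det(Rᵀ·P·R) ≤ 1, and equality holds when p1 = ⋯ = pn = 1/n; i.e., the uniform design maximizes det(Rᵀ·P·R) over the probability simplex. -/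
/-!
`Rᵀ P R` is positive semidefinite, and since every `R i j ^ 2 = 1` its trace is
`tr (P R Rᵀ) = m ∑ pᵢ = m`. AM-GM on its eigenvalues then bounds the determinant by
`(tr / m) ^ m = 1`. For the uniform design `Rᵀ (I / n) R = (Rᵀ R) / n = I`.
-/

open Matrix Finset

theorem Real.prod_le_sum_div_card_pow {ι : Type*} (s : Finset ι) (z : ι → ℝ)
    (hz : ∀ i ∈ s, 0 ≤ z i) : ∏ i ∈ s, z i ≤ ((∑ i ∈ s, z i) / #s) ^ #s := by
  rcases s.eq_empty_or_nonempty with rfl | hs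
  · simp
  have hcard : (#s : ℝ) ≠ 0 := by exact_mod_cast hs.card_ne_zero
  have hprod : 0 ≤ ∏ i ∈ s, z i := prod_nonneg hz
  have amgm := Real.geom_mean_le_arith_mean_weighted s (fun _ ↦ (#s : ℝ)⁻¹) z
    (fun _ _ ↦ by positivity) (by simp [hcard]) hz
  rw [Real.finsetProd_rpow s z hz, ← mul_sum, inv_mul_eq_div] at amgm
  calc ∏ i ∈ s, z i = ((∏ i ∈ s, z i) ^ (#s : ℝ)⁻¹) ^ #s :=
        (Real.rpow_inv_natCast_pow hprod hs.card_ne_zero).symm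
    _ ≤ ((∑ i ∈ s, z i) / #s) ^ #s := by gcongr

theorem Matrix.PosSemidef.det_le_trace_div_card_pow {ι : Type*} [Fintype ι] [DecidableEq ι]
    {A : Matrix ι ι ℝ} (hA : A.PosSemidef) :
    A.det ≤ (A.trace / Fintype.card ι) ^ Fintype.card ι := by
  have := Real.prod_le_sum_div_card_pow univ hA.isHermitian.eigenvalues
    fun i _ ↦ hA.eigenvalues_nonneg i
  simpa [hA.isHermitian.det_eq_prod_eigenvalues, hA.isHermitian.trace_eq_sum_eigenvalues]
    using this

theorem Matrix.posSemidef_transpose_mul_diagonal_mul_s17 {ι κ : Type*} [Fintype ι] [DecidableEq ι]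
    [Fintype κ] (R : Matrix ι κ ℝ) {p : ι → ℝ} (hp : ∀ i, 0 ≤ p i) :
    (Rᵀ * diagonal p * R).PosSemidef := by
  simpa [conjTranspose_eq_transpose_of_trivial] using
    (posSemidef_diagonal_iff.mpr hp).conjTranspose_mul_mul_same R

theorem Matrix.trace_transpose_mul_diagonal_mul_of_sq_eq_one {ι κ : Type*} [Fintype ι]
    [DecidableEq ι] [Fintype κ] {R : Matrix ι κ ℝ} (hR : ∀ i j, R i j ^ 2 = 1) (p : ι → ℝ) :
    (Rᵀ * diagonal p * R).trace = Fintype.card κ * ∑ i, p i := by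
  have hRRt : ∀ i, (R * Rᵀ) i i = Fintype.card κ := fun i ↦ by
    simp [mul_apply, ← sq, hR]
  rw [trace_mul_comm, ← Matrix.mul_assoc]
  simp [trace, mul_diagonal, hRRt, ← sum_mul, mul_comm]

theorem stmt17_general (n m : ℕ) (hn : 1 ≤ n)
    (R : Matrix (Fin n) (Fin m) ℝ)
    (hR : ∀ i j, R i j = 1 ∨ R i j = -1)
    (horth : Rᵀ * R = (n : ℝ) • (1 : Matrix (Fin m) (Fin m) ℝ))
    (p : Fin n → ℝ) (hp : ∀ i, 0 ≤ p i) (hsum : ∑ i, p i = 1) :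
    (Rᵀ * Matrix.diagonal p * R).det ≤ 1 ∧
    (Rᵀ * Matrix.diagonal (fun _ : Fin n => (1 : ℝ) / n) * R).det = 1 := by
  have hR_sq : ∀ i j, R i j ^ 2 = 1 := fun i j ↦ by rcases hR i j with h | h <;> simp [h]
  constructor
  · calc (Rᵀ * diagonal p * R).det
        ≤ ((Rᵀ * diagonal p * R).trace / m) ^ m := by
          simpa using (R.posSemidef_transpose_mul_diagonal_mul_s17 hp).det_le_trace_div_card_pow
      _ = 1 := by
          rw [trace_transpose_mul_diagonal_mul_of_sq_eq_one hR_sq, hsum, Fintype.card_fin]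
          rcases eq_or_ne m 0 with rfl | hm
          · simp
          · rw [mul_one, div_self (Nat.cast_ne_zero.mpr hm), one_pow]
  · have hn0 : (n : ℝ) ≠ 0 := Nat.cast_ne_zero.mpr (by omega)
    rw [← smul_one_eq_diagonal, Matrix.mul_smul, Matrix.mul_one, Matrix.smul_mul, horth,
      smul_smul, one_div_mul_cancel hn0, one_smul, det_one]

/-- Let `R` be an `n×m` matrix with ±1 entries and mutually orthogonal columns
(`Rᵀ·R = n·I_m`), and `P = diag(p1,…,pn)` with `pi ≥ 0` summing to `1`.  Then
`det(Rᵀ·P·R) ≤ 1`, with equality for the uniform design `pi = 1/n`; i.e., the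
uniform design maximizes `det(Rᵀ·P·R)` over the probability simplex. -/
theorem stmt17 (n m : ℕ) (hn : 1 ≤ n) (hm1 : 1 ≤ m) (hm : m ≤ n)
    (R : Matrix (Fin n) (Fin m) ℝ)
    (hR : ∀ i j, R i j = 1 ∨ R i j = -1)
    (horth : Rᵀ * R = (n : ℝ) • (1 : Matrix (Fin m) (Fin m) ℝ))
    (p : Fin n → ℝ) (hp : ∀ i, 0 ≤ p i) (hsum : ∑ i, p i = 1) :
    (Rᵀ * Matrix.diagonal p * R).det ≤ 1 ∧
    (Rᵀ * Matrix.diagonal (fun _ : Fin n => (1 : ℝ) / n) * R).det = 1 :=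
  stmt17_general n m hn R hR horth p hp hsum
end
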